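/- arXiv:2203.10801 — 3 statements merged into one kernel-verified Lean document; each statement's English description precedes it below -/
import Mathlib

section
/- Let n ≥ 4 with n ≡ 1 (mod 3), and let V = (Fin n → ZMod 3) with the symmetric bilinear form B(x,y) = Σ_{i=1}^{n−1} x_i y_i + 2 x_n y_n (Gram determinant −1, i.e., type '−'). Then: (a) there exists an injective group homomorphism ψ from the symmetric group S_{n+2} to the group of linear automorphisms of V such that for every transposition τ ∈ S_{n+2}, ψ(τ) is a reflection t_v for some v ∈ V with B(v,v) = 2; and (b) there is no injective group homomorphism from S_{n+3} to the linear automorphisms of V sending every transposition to such a reflection. (Equivalently, φ(O_n^{−,+}(3)) = n+2 when n ≡ 1 (mod 3).) -/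
/-- The symmetric bilinear form `B x y = ∑_{i<n-1} x i * y i + 2 * x (n-1) * y (n-1)`
on `(ZMod 3)^n` (Gram determinant `-1`, type `-`). -/
def oForm (n : ℕ) (x y : Fin n → ZMod 3) : ZMod 3 :=
  ∑ i : Fin n, (if (i : ℕ) = n - 1 then 2 else 1) * (x i * y i)

/-!
Upper bound: let `S_{m+1}` act faithfully with every transposition acting as a reflection `t_v`,
`B v v = 2`, and let `v_k` belong to `(k, k+1)`. Commuting reflections either coincide or have
orthogonal vectors, so `B v_i v_j = 0` for `|i - j| ≥ 2`; adjacent transpositions do not commute,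
so `B v_k v_{k+1} ≠ 0`, i.e. `= ±1` over `𝔽₃`. After changing signs, the Gram matrix of
`v_0, …, v_{m-1}` is the Cartan matrix of type `A_m`, of determinant `m + 1`. For `m = n + 2`
this is `n + 3 ≢ 0 (mod 3)`, which would give `n + 2` independent vectors in `𝔽₃ⁿ`.

Embedding: `S_{n+2}` permutes the coordinates of `𝔽₃^{n+2}`, preserving the dot product, the
sum-zero hyperplane `W` and the all-ones vector `𝟙`, which lies in `W` and spans its radical as
`3 ∣ n + 2`. The quotient `W / 𝔽₃𝟙` is isometric to `(𝔽₃ⁿ, B)`, and the transposition `(a b)`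
acts on it as the reflection in the image of `e_a - e_b`, a vector of norm `2`.
-/

open Equiv Module Matrix Sum

section Reflection

variable {K V : Type*} [AddCommGroup V]

theorem commute_of_reflections_of_orthogonal [CommRing K] [Module K V]
    {B : LinearMap.BilinForm K V} (hB : B.IsSymm) {f g : V ≃ₗ[K] V} {u v : V}
    (hf : ∀ w, f w = w - B w u • u) (hg : ∀ w, g w = w - B w v • v) (huv : B u v = 0) :
    Commute f g := by
  have hvu : B v u = 0 := by rw [hB.eq, huv]
  refine LinearEquiv.ext fun w => ?_
  simp only [LinearEquiv.mul_apply, hf, hg, map_sub, map_smul, LinearMap.sub_apply,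
    LinearMap.smul_apply, smul_eq_mul, huv, hvu]
  module

theorem orthogonal_or_eq_of_commute_reflections [Field K] [Module K V]
    {B : LinearMap.BilinForm K V} (hB : B.IsSymm) (h2 : (2 : K) ≠ 0) {f g : V ≃ₗ[K] V} {u v : V}
    (hf : ∀ w, f w = w - B w u • u) (hg : ∀ w, g w = w - B w v • v)
    (hu : B u u = 2) (hv : B v v = 2) (hfg : Commute f g) : B u v = 0 ∨ f = g := by
  set β := B u v with hβ
  rcases eq_or_ne β 0 with h0 | hne
  · exact Or.inl h0
  right
  have hvu : B v u = β := hB.eq v u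
  have hcomm := LinearEquiv.congr_fun hfg.eq u
  simp only [LinearEquiv.mul_apply, hf, hg, map_sub, map_smul, LinearMap.sub_apply,
    LinearMap.smul_apply, smul_eq_mul, hu, hvu, ← hβ] at hcomm
  -- at `u` the two sides differ by `β ^ 2 • u - 2 * β • v`
  have h2v : (2 : K) • v = β • u := by
    apply smul_right_injective V hne
    linear_combination (norm := module) -hcomm
  set c := β / 2
  have hvc : v = c • u := by
    rw [← inv_smul_smul₀ h2 v, h2v, smul_smul, inv_mul_eq_div]
  have hcc : c * c = 1 := by
    simp only [hvc, map_smul, LinearMap.smul_apply, hu, smul_eq_mul] at hv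
    exact mul_right_cancel₀ h2 (by linear_combination hv)
  refine LinearEquiv.ext fun w => ?_
  rw [hf, hg, hvc, map_smul, smul_eq_mul, smul_smul, mul_assoc, mul_comm, mul_assoc, hcc, mul_one]

end Reflection

/-- `m + 1` is the determinant of the Cartan matrix of type `A_m`. -/
theorem linearIndependent_of_gram_eq_cartanA {K V : Type*} [Field K] [AddCommGroup V] [Module K V]
    (B : LinearMap.BilinForm K V) {m : ℕ} (hm : ((m + 1 : ℕ) : K) ≠ 0) (u : Fin m → V)
    (hu : ∀ i j, B (u i) (u j) = CartanMatrix.A m i j) : LinearIndependent K u := by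
  rw [Fintype.linearIndependent_iff]
  intro g hg
  -- `f k` is `g (k - 1)`, extended by zero outside `1, …, m`
  set f : ℕ → K := fun k => ∑ i : Fin m, if (i : ℕ) + 1 = k then g i else 0 with hf
  have hf_succ (i : Fin m) : f (i + 1) = g i := by
    simp only [hf, add_left_inj, ← Fin.ext_iff, Finset.sum_ite_eq', Finset.mem_univ, if_true]
  have hf_zero : f 0 = 0 := by simp [hf]
  have hf_top : f (m + 1) = 0 := Finset.sum_eq_zero fun i _ => if_neg (by omega)
  have hrec (j : Fin m) : f j - 2 * f (j + 1) + f (j + 2) = 0 := by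
    have h := congrArg (fun x => B x (u j)) hg
    simp only [LinearMap.map_sum₂, LinearMap.map_smul₂, hu, smul_eq_mul, map_zero,
      LinearMap.zero_apply] at h
    rw [← neg_eq_zero, ← h]
    simp only [hf, Finset.mul_sum, ← Finset.sum_sub_distrib, ← Finset.sum_add_distrib,
      ← Finset.sum_neg_distrib]
    refine Finset.sum_congr rfl fun i _ => ?_
    simp only [CartanMatrix.A, Matrix.of_apply, Fin.ext_iff]
    split_ifs <;> first | omega | simp [mul_comm]
  have hlin : ∀ k ≤ m, f k = k * f 1 ∧ f (k + 1) = (k + 1) * f 1 := by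
    intro k
    induction k with
    | zero => simp [hf_zero]
    | succ k ih =>
      intro hk
      obtain ⟨h0, h1⟩ := ih (by omega)
      refine ⟨by push_cast; exact h1, ?_⟩
      have := hrec ⟨k, by omega⟩
      simp only at this
      rw [show k + 1 + 1 = k + 2 by ring]
      push_cast
      linear_combination this + (2 : K) * h1 - h0
  have hf1 : f 1 = 0 := by
    have := (hlin m le_rfl).2
    rw [hf_top] at this
    exact (mul_eq_zero.mp this.symm).resolve_left (by exact_mod_cast hm)
  intro i
  rw [← hf_succ, (hlin i i.isLt.le).2, hf1, mul_zero]

theorem exists_gram_eq_cartanA {K V : Type*} [CommRing K] [AddCommGroup V] [Module K V]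
    {B : LinearMap.BilinForm K V} (hB : B.IsSymm) {m : ℕ} (v : ℕ → V)
    (hdiag : ∀ k < m, B (v k) (v k) = 2)
    (hadj : ∀ k, k + 1 < m → B (v k) (v (k + 1)) ^ 2 = 1)
    (hfar : ∀ i j, j < m → i + 2 ≤ j → B (v i) (v j) = 0) :
    ∃ u : Fin m → V, ∀ i j, B (u i) (u j) = CartanMatrix.A m i j := by
  -- rescale by signs so that consecutive vectors pair to `-1`
  set ε : ℕ → K := fun k => ∏ l ∈ Finset.range k, -B (v l) (v (l + 1)) with hε
  have hε_succ (k : ℕ) : ε (k + 1) = ε k * -B (v k) (v (k + 1)) := Finset.prod_range_succ _ _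
  have hε_sq : ∀ k < m, ε k ^ 2 = 1 := by
    intro k
    induction k with
    | zero => simp [hε]
    | succ k ih =>
      intro hk
      rw [hε_succ, mul_pow, neg_sq, hadj k hk, ih (by omega), one_mul]
  refine ⟨fun i => ε i • v i, fun i j => ?_⟩
  have hi := hε_sq i i.isLt
  have hj := hε_sq j j.isLt
  simp only [map_smul, LinearMap.smul_apply, smul_eq_mul, CartanMatrix.A, Matrix.of_apply,
    Fin.ext_iff]
  split_ifs with h1 h2
  · rw [h1, hdiag j j.isLt]
    linear_combination 2 * hj
  · rcases h2 with h2 | h2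
    · rw [← h2, hε_succ]
      linear_combination (-(B (v i) (v (i + 1))) ^ 2) * hi - hadj i (by omega)
    · rw [← h2, hε_succ, hB.eq (v (j + 1))]
      linear_combination (-(B (v j) (v (j + 1))) ^ 2) * hj - hadj j (by omega)
  · rcases Nat.lt_or_gt_of_ne h1 with h | h
    · rw [hfar i j j.isLt (by omega)]; simp
    · rw [hB.eq, hfar j i i.isLt (by omega)]; simp

theorem Equiv.not_commute_swap_swap {α : Type*} [DecidableEq α] {a b c : α} (hab : a ≠ b)
    (hac : a ≠ c) (hbc : b ≠ c) : ¬Commute (swap a b) (swap b c) := fun h => by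
  have := congrArg (· a) h.eq
  simp only [Perm.mul_apply, swap_apply_of_ne_of_ne hab hac, swap_apply_left] at this
  exact hbc this

def SwapsToReflections {K V α : Type*} [CommRing K] [AddCommGroup V] [Module K V] [DecidableEq α]
    (B : LinearMap.BilinForm K V) (ψ : Perm α →* (V ≃ₗ[K] V)) : Prop :=
  ∀ τ : Perm α, τ.IsSwap → ∃ v, B v v = 2 ∧ ∀ w, ψ τ w = w - B w v • v

theorem le_finrank_of_swapsToReflections {V α : Type*} [AddCommGroup V] [Module (ZMod 3) V]
    [Module.Finite (ZMod 3) V] [DecidableEq α] {B : LinearMap.BilinForm (ZMod 3) V}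
    (hB : B.IsSymm) {ψ : Perm α →* (V ≃ₗ[ZMod 3] V)} (hψ : Function.Injective ψ)
    (hrefl : SwapsToReflections B ψ) {m : ℕ} (hm : ((m + 1 : ℕ) : ZMod 3) ≠ 0) {a : ℕ → α}
    (ha : Set.InjOn a (Set.Iic m)) : m ≤ finrank (ZMod 3) V := by
  have hpt {i j : ℕ} (hi : i ≤ m) (hj : j ≤ m) (hij : i ≠ j) : a i ≠ a j :=
    fun h => hij (ha hi hj h)
  set τ : ℕ → Perm α := fun k => swap (a k) (a (k + 1)) with hτ
  have hv : ∀ k, ∃ v, k < m → B v v = 2 ∧ ∀ w, ψ (τ k) w = w - B w v • v := by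
    intro k
    by_cases hk : k < m
    · obtain ⟨v, hv⟩ := hrefl (τ k) ⟨_, _, by apply hpt <;> omega, rfl⟩
      exact ⟨v, fun _ => hv⟩
    · exact ⟨0, fun h => absurd h hk⟩
  choose v hv using hv
  have hfar : ∀ i j, j < m → i + 2 ≤ j → B (v i) (v j) = 0 := by
    intro i j hj hij
    have hc : Commute (τ i) (τ j) := (Perm.disjoint_swap_swap (by
      simp only [List.nodup_cons, List.mem_cons, List.not_mem_nil, or_false, not_or,
        List.nodup_nil, and_true, not_false_eq_true]
      refine ⟨⟨?_, ?_, ?_⟩, ⟨?_, ?_⟩, ?_⟩ <;> apply hpt <;> omega)).commute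
    refine (orthogonal_or_eq_of_commute_reflections hB (by decide) (hv i (by omega)).2
      (hv j hj).2 (hv i (by omega)).1 (hv j hj).1 (hc.map ψ)).resolve_right fun h => ?_
    have := congrArg (· (a i)) (hψ h)
    simp only [hτ, swap_apply_left] at this
    rw [swap_apply_of_ne_of_ne (by apply hpt <;> omega)
      (by apply hpt <;> omega)] at this
    exact absurd this (by apply hpt <;> omega)
  have hadj : ∀ k, k + 1 < m → B (v k) (v (k + 1)) ^ 2 = 1 := by
    intro k hk
    suffices B (v k) (v (k + 1)) ≠ 0 from (by decide : ∀ b : ZMod 3, b ≠ 0 → b ^ 2 = 1) _ this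
    exact fun h0 => not_commute_swap_swap (by apply hpt <;> omega)
      (by apply hpt <;> omega) (by apply hpt <;> omega)
      ((commute_map_iff hψ).mp (commute_of_reflections_of_orthogonal hB (hv k (by omega)).2
        (hv (k + 1) hk).2 h0))
  obtain ⟨u, hu⟩ := exists_gram_eq_cartanA hB v (fun k hk => (hv k hk).1) hadj hfar
  simpa using (linearIndependent_of_gram_eq_cartanA B hm u hu).fintype_card_le_finrank

theorem SwapsToReflections.comp_permCongrHom {K V α β : Type*} [CommRing K] [AddCommGroup V]
    [Module K V] [DecidableEq α] [DecidableEq β] {B : LinearMap.BilinForm K V}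
    {ψ : Perm β →* (V ≃ₗ[K] V)} (h : SwapsToReflections B ψ) (e : α ≃ β) :
    SwapsToReflections B (ψ.comp e.permCongrHom.toMonoidHom) := by
  rintro _ ⟨a, b, hab, rfl⟩
  exact h _ ⟨e a, e b, e.injective.ne hab, e.symm_trans_swap_trans a b⟩

theorem Equiv.Perm.eq_one_of_forall_comp_symm_eq_add_smul_one {R ι : Type*} [Ring R]
    [Nontrivial R] [Fintype ι] [DecidableEq ι] (hι : 5 ≤ Fintype.card ι) {σ : Perm ι}
    (h : ∀ x : ι → R, ∑ i, x i = 0 → ∃ c : R, x ∘ σ.symm = x + c • 1) : σ = 1 := by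
  ext a
  by_contra hne
  obtain ⟨b, -, hb⟩ := Finset.exists_mem_notMem_of_card_lt_card (s := {a, σ a})
    (t := Finset.univ) ((Finset.card_le_two).trans_lt (by simp; omega))
  obtain ⟨j, -, hj⟩ := Finset.exists_mem_notMem_of_card_lt_card (s := {a, b, σ a, σ b})
    (t := Finset.univ) ((Finset.card_le_four).trans_lt (by simp; omega))
  simp only [Finset.mem_insert, Finset.mem_singleton, not_or] at hb hj
  obtain ⟨c, hc⟩ := h (Pi.single a 1 - Pi.single b 1) (by simp [Finset.sum_sub_distrib])
  -- coordinate `σ a` forces `c = 1`, coordinate `j` forces `c = 0`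
  have hσa := congrFun hc (σ a)
  have hj' := congrFun hc j
  have hne' : σ a ≠ a := hne
  simp [hne', Ne.symm hb.1, Ne.symm hb.2, Equiv.symm_apply_eq, hj] at hσa hj'
  exact one_ne_zero (hσa.trans hj'.symm)

section PermutationModule

variable {κ : Type*} [Fintype κ] [DecidableEq κ] (p : κ)

def weightDiag : Matrix κ κ (ZMod 3) := diagonal fun i => if i = p then 2 else 1

def weightForm : LinearMap.BilinForm (ZMod 3) (κ → ZMod 3) := toBilin' (weightDiag p)

theorem weightForm_isSymm : (weightForm p).IsSymm := ⟨fun x y => by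
  simp only [weightForm, toBilin'_apply', weightDiag, mulVec_diagonal, dotProduct]
  exact Finset.sum_congr rfl fun i _ => by ring⟩

/- With `a, b` the two extra points, the rows `e_i - e_p - e_a + e_b` (`i ≠ p`) and `e_p - e_a`
form, modulo `𝟙`, an orthogonal basis of the sum-zero vectors, of norms `1` and `2`. -/
def coordRow (i : κ) : κ ⊕ Fin 2 → ZMod 3 :=
  if i = p then Pi.single (inl p) 1 - Pi.single (inr 0) 1
  else Pi.single (inl i) 1 - Pi.single (inl p) 1 - Pi.single (inr 0) 1 + Pi.single (inr 1) 1

def coordMatrix : Matrix κ (κ ⊕ Fin 2) (ZMod 3) := of (coordRow p)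

theorem coordMatrix_mulVec_apply (x : κ ⊕ Fin 2 → ZMod 3) (i : κ) :
    (coordMatrix p *ᵥ x) i = if i = p then x (inl p) - x (inr 0)
      else x (inl i) - x (inl p) - x (inr 0) + x (inr 1) := by
  change coordRow p i ⬝ᵥ x = _
  rw [coordRow]
  split_ifs <;> simp [sub_dotProduct, add_dotProduct]

theorem coordMatrix_mul_transpose : coordMatrix p * (coordMatrix p)ᵀ = weightDiag p := by
  ext i j
  change (coordMatrix p *ᵥ coordRow p j) i = _
  rw [coordMatrix_mulVec_apply, weightDiag, diagonal_apply]
  by_cases hi : i = p <;> by_cases hj : j = p <;> by_cases hij : i = j <;>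
    simp [coordRow, hi, hj, hij, @eq_comm _ p j] <;> decide

theorem weightDiag_mul_self : weightDiag p * weightDiag p = 1 := by
  rw [weightDiag, diagonal_mul_diagonal, ← diagonal_one]
  congr 1
  ext i
  split_ifs <;> decide

theorem coordMatrix_mulVec_one : coordMatrix p *ᵥ 1 = 0 := by
  ext i
  rw [coordMatrix_mulVec_apply]
  split_ifs <;> simp

theorem eq_smul_one_of_coordMatrix_mulVec_eq_zero (hκ : (Fintype.card κ : ZMod 3) = 1)
    {y : κ ⊕ Fin 2 → ZMod 3} (hsum : ∑ j, y j = 0) (hy : coordMatrix p *ᵥ y = 0) :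
    y = y (inr 0) • 1 := by
  have hrow (i : κ) := congrFun hy i
  simp only [coordMatrix_mulVec_apply, Pi.zero_apply] at hrow
  set t := y (inr 0)
  have hp : y (inl p) = t := by simpa [sub_eq_zero] using hrow p
  have hi (i : κ) (h : i ≠ p) : y (inl i) = 2 * t - y (inr 1) := by
    have := hrow i
    rw [if_neg h] at this
    linear_combination this + hp
  have hκsum : ∑ i, y (inl i) = t := by
    have : ∑ i, (y (inl i) - (2 * t - y (inr 1))) = y (inr 1) - t := by
      rw [Finset.sum_eq_single p (fun i _ h => by rw [hi i h, sub_self]) (by simp), hp]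
      ring
    rw [Finset.sum_sub_distrib, Finset.sum_const, Finset.card_univ, nsmul_eq_mul, hκ] at this
    linear_combination this
  have h3 : (3 : ZMod 3) = 0 := by decide
  rw [Fintype.sum_sum_type, Fin.sum_univ_two, hκsum] at hsum
  have hb : y (inr 1) = t := by linear_combination hsum - t * h3
  ext (i | k)
  · by_cases h : i = p
    · simp [h, hp]
    · simp [hi i h, hb]
      ring
  · fin_cases k
    · simp [t]
    · simp [hb]

def liftMatrix : Matrix (κ ⊕ Fin 2) κ (ZMod 3) := (coordMatrix p)ᵀ * weightDiag p

theorem coordMatrix_mulVec_liftMatrix_mulVec (w : κ → ZMod 3) :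
    coordMatrix p *ᵥ (liftMatrix p *ᵥ w) = w := by
  rw [liftMatrix, mulVec_mulVec, ← Matrix.mul_assoc, coordMatrix_mul_transpose,
    weightDiag_mul_self, one_mulVec]

theorem sum_liftMatrix_mulVec (w : κ → ZMod 3) : ∑ j, (liftMatrix p *ᵥ w) j = 0 := by
  rw [← one_dotProduct, liftMatrix, ← mulVec_mulVec, dotProduct_mulVec, vecMul_transpose,
    coordMatrix_mulVec_one, zero_dotProduct]

/-- The action of `σ` on `W / 𝔽₃𝟙`, read in the coordinates given by `coordMatrix p`. -/
def permRep (σ : Perm (κ ⊕ Fin 2)) : Module.End (ZMod 3) (κ → ZMod 3) :=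
  (coordMatrix p).mulVecLin ∘ₗ LinearMap.funLeft (ZMod 3) (ZMod 3) σ.symm ∘ₗ
    (liftMatrix p).mulVecLin

theorem permRep_apply (σ : Perm (κ ⊕ Fin 2)) (w : κ → ZMod 3) :
    permRep p σ w = coordMatrix p *ᵥ ((liftMatrix p *ᵥ w) ∘ σ.symm) := rfl

variable (hκ : (Fintype.card κ : ZMod 3) = 1)
include hκ

theorem exists_liftMatrix_mulVec_coordMatrix_mulVec {x : κ ⊕ Fin 2 → ZMod 3}
    (hx : ∑ j, x j = 0) : ∃ c : ZMod 3, liftMatrix p *ᵥ (coordMatrix p *ᵥ x) = x + c • 1 := by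
  set y := liftMatrix p *ᵥ (coordMatrix p *ᵥ x) - x with hy
  have hy0 := eq_smul_one_of_coordMatrix_mulVec_eq_zero p hκ (y := y)
    (by simp only [hy, Pi.sub_apply, Finset.sum_sub_distrib, sum_liftMatrix_mulVec, hx, sub_zero])
    (by rw [hy, mulVec_sub, coordMatrix_mulVec_liftMatrix_mulVec, sub_self])
  exact ⟨_, by rw [← hy0, hy, add_sub_cancel]⟩

theorem weightForm_coordMatrix_mulVec {x y : κ ⊕ Fin 2 → ZMod 3} (hx : ∑ j, x j = 0)
    (hy : ∑ j, y j = 0) : weightForm p (coordMatrix p *ᵥ x) (coordMatrix p *ᵥ y) = x ⬝ᵥ y := by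
  obtain ⟨c, hc⟩ := exists_liftMatrix_mulVec_coordMatrix_mulVec p hκ hy
  rw [weightForm, toBilin'_apply', dotProduct_comm, dotProduct_mulVec, dotProduct_comm,
    ← mulVec_transpose, mulVec_mulVec, ← liftMatrix, hc, dotProduct_add, dotProduct_smul,
    dotProduct_one, hx, smul_zero, add_zero]

theorem permRep_coordMatrix_mulVec (σ : Perm (κ ⊕ Fin 2)) {x : κ ⊕ Fin 2 → ZMod 3}
    (hx : ∑ j, x j = 0) : permRep p σ (coordMatrix p *ᵥ x) = coordMatrix p *ᵥ (x ∘ σ.symm) := by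
  obtain ⟨c, hc⟩ := exists_liftMatrix_mulVec_coordMatrix_mulVec p hκ hx
  rw [permRep_apply, hc, show (x + c • 1) ∘ σ.symm = x ∘ σ.symm + c • 1 from rfl, mulVec_add,
    mulVec_smul, coordMatrix_mulVec_one, smul_zero, add_zero]

def permRepHom : Perm (κ ⊕ Fin 2) →* Module.End (ZMod 3) (κ → ZMod 3) where
  toFun := permRep p
  map_one' := LinearMap.ext (coordMatrix_mulVec_liftMatrix_mulVec p)
  map_mul' σ τ := LinearMap.ext fun w => by
    rw [Module.End.mul_apply, permRep_apply p τ]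
    exact (permRep_coordMatrix_mulVec p hκ σ (x := (liftMatrix p *ᵥ w) ∘ τ.symm)
      ((Equiv.sum_comp τ.symm _).trans (sum_liftMatrix_mulVec p w))).symm

theorem permRep_swap (a b : κ ⊕ Fin 2) (w : κ → ZMod 3) :
    permRep p (swap a b) w =
      w - weightForm p w (coordMatrix p *ᵥ (Pi.single a 1 - Pi.single b 1)) •
        coordMatrix p *ᵥ (Pi.single a 1 - Pi.single b 1) := by
  set d : κ ⊕ Fin 2 → ZMod 3 := Pi.single a 1 - Pi.single b 1
  set z := liftMatrix p *ᵥ w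
  have hd : ∑ j, d j = 0 := by simp [d, Finset.sum_sub_distrib]
  have hz : z ∘ (swap a b).symm = z - (z ⬝ᵥ d) • d := by
    ext j
    simp only [d, Function.comp_apply, symm_swap, swap_apply_def, dotProduct_sub,
      dotProduct_single, Pi.sub_apply, Pi.smul_apply, Pi.single_apply, smul_eq_mul]
    split_ifs <;> simp_all
  rw [permRep_apply, hz, mulVec_sub, mulVec_smul, coordMatrix_mulVec_liftMatrix_mulVec,
    ← weightForm_coordMatrix_mulVec p hκ (sum_liftMatrix_mulVec p w) hd,
    coordMatrix_mulVec_liftMatrix_mulVec]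

theorem exists_injective_swapsToReflections (hκ3 : 3 ≤ Fintype.card κ) :
    ∃ ψ : Perm (κ ⊕ Fin 2) →* ((κ → ZMod 3) ≃ₗ[ZMod 3] (κ → ZMod 3)),
      Function.Injective ψ ∧ SwapsToReflections (weightForm p) ψ := by
  refine ⟨(LinearMap.GeneralLinearGroup.generalLinearEquiv _ _).toMonoidHom.comp
    (permRepHom p hκ).toHomUnits, ?_, ?_⟩
  · refine (injective_iff_map_eq_one _).2 fun σ hσ => ?_
    have hσw (w : κ → ZMod 3) : permRep p σ w = w := LinearEquiv.congr_fun hσ w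
    refine Perm.eq_one_of_forall_comp_symm_eq_add_smul_one (R := ZMod 3) (by simp; omega)
      fun x hx => ?_
    have := eq_smul_one_of_coordMatrix_mulVec_eq_zero p hκ (y := x ∘ σ.symm - x)
      (by simp only [Pi.sub_apply, Function.comp_apply, Finset.sum_sub_distrib,
        Equiv.sum_comp σ.symm x, sub_self])
      (by rw [mulVec_sub, ← permRep_coordMatrix_mulVec p hκ σ hx, hσw, sub_self])
    exact ⟨_, by rw [← this, add_sub_cancel]⟩
  · rintro _ ⟨a, b, hab, rfl⟩
    have hd : ∑ j, (Pi.single a 1 - Pi.single b 1 : κ ⊕ Fin 2 → ZMod 3) j = 0 := by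
      simp [Finset.sum_sub_distrib]
    refine ⟨_, ?_, permRep_swap p hκ a b⟩
    rw [weightForm_coordMatrix_mulVec p hκ hd hd]
    simp [hab, Ne.symm hab, one_add_one_eq_two]

end PermutationModule

theorem oForm_eq_weightForm {n : ℕ} (hn : 0 < n) (x y : Fin n → ZMod 3) :
    oForm n x y = weightForm (⟨n - 1, by omega⟩ : Fin n) x y := by
  simp only [oForm, weightForm, toBilin'_apply', weightDiag, mulVec_diagonal, dotProduct,
    Fin.ext_iff]
  exact Finset.sum_congr rfl fun i _ => by ring

/-- φ(O_n^{-,+}(3)) = n + 2 when n ≡ 1 (mod 3): S_{n+2} embeds with transpositions going to reflections t_v with B(v,v) = 2, while S_{n+3} does not. -/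
theorem phi_O_minus_plus_3_mod_one (n : ℕ) (hn : 4 ≤ n) (hmod : n % 3 = 1) :
    (∃ ψ : Equiv.Perm (Fin (n + 2)) →* ((Fin n → ZMod 3) ≃ₗ[ZMod 3] (Fin n → ZMod 3)),
      Function.Injective ψ ∧
      ∀ τ : Equiv.Perm (Fin (n + 2)), τ.IsSwap →
        ∃ v : Fin n → ZMod 3, oForm n v v = 2 ∧
          ∀ w, (ψ τ) w = w - oForm n w v • v) ∧
    ¬ (∃ ψ : Equiv.Perm (Fin (n + 3)) →* ((Fin n → ZMod 3) ≃ₗ[ZMod 3] (Fin n → ZMod 3)),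
      Function.Injective ψ ∧
      ∀ τ : Equiv.Perm (Fin (n + 3)), τ.IsSwap →
        ∃ v : Fin n → ZMod 3, oForm n v v = 2 ∧
          ∀ w, (ψ τ) w = w - oForm n w v • v) := by
  simp only [oForm_eq_weightForm (n := n) (by omega)]
  set p : Fin n := ⟨n - 1, by omega⟩
  constructor
  · have hκ : (Fintype.card (Fin n) : ZMod 3) = 1 := by
      rw [Fintype.card_fin, ← ZMod.natCast_mod, hmod, Nat.cast_one]
    obtain ⟨ψ, hψ, hrefl⟩ := exists_injective_swapsToReflections p hκ (by simp; omega)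
    exact ⟨ψ.comp finSumFinEquiv.symm.permCongrHom.toMonoidHom, hψ.comp (MulEquiv.injective _),
      hrefl.comp_permCongrHom _⟩
  · rintro ⟨ψ, hψ, hrefl⟩
    have := le_finrank_of_swapsToReflections (weightForm_isSymm p) hψ hrefl (m := n + 2)
      (by rw [Ne, ZMod.natCast_eq_zero_iff]; omega) (a := fun k => Fin.ofNat (n + 3) k)
      (fun i hi j hj h => by
        simp only [Set.mem_Iic] at hi hj
        simpa [Fin.ext_iff, Nat.mod_eq_of_lt (show i < n + 3 by omega),
          Nat.mod_eq_of_lt (show j < n + 3 by omega)] using h)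
    simp at this
end

section
/- Let n ≥ 6 be even with n ≡ 6 (mod 8), and let V = (Fin n → ZMod 2) with the minus-type quadratic form Q(x) = Σ_{i=1}^{n/2−1} x_{2i−1} x_{2i} + x_{n−1}² + x_{n−1} x_n + x_n² and its polar bilinear form B(x,y) = Q(x+y) + Q(x) + Q(y). Then: (a) there exists an injective group homomorphism ψ from the symmetric group S_n to the group of linear automorphisms of V such that for every transposition τ ∈ S_n, ψ(τ) is an orthogonal transvection t_v for some v ∈ V with Q(v) = 1; and (b) there is no injective group homomorphism from S_{n+1} to the linear automorphisms of V sending every transposition to such a transvection. (Equivalently, φ(O_n^{−}(2)) = n when n ≡ 6 (mod 8).) -/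
/-- The minus-type quadratic form on `(ZMod 2)^n` (`n` even, `n ≥ 2`):
`Q x = ∑_{i < n/2 - 1} x (2i) * x (2i+1) + x (n-2)² + x (n-2) * x (n-1) + x (n-1)²`
(0-indexed). -/
def Qform (n : ℕ) (hn : 2 ≤ n) (x : Fin n → ZMod 2) : ZMod 2 :=
  (∑ i : Fin (n / 2 - 1),
    x ⟨2 * i.1, by have := i.2; omega⟩ * x ⟨2 * i.1 + 1, by have := i.2; omega⟩) +
    x ⟨n - 2, by omega⟩ ^ 2 + x ⟨n - 2, by omega⟩ * x ⟨n - 1, by omega⟩ +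
    x ⟨n - 1, by omega⟩ ^ 2

/-- The polar bilinear form `B x y = Q (x + y) + Q x + Q y` of a quadratic form `Q`. -/
def polarForm {n : ℕ} (Q : (Fin n → ZMod 2) → ZMod 2) (x y : Fin n → ZMod 2) : ZMod 2 :=
  Q (x + y) + Q x + Q y

/-!
Call `u : ι → V` a Gram family with value `q` if `Q (u i) = q` and `B (u i) (u j) = 1` for
`i ≠ j`. In characteristic 2 with `|ι|` even it is linearly independent, and the transvection
`t_{u i + u j}` swaps `u i` and `u j` and fixes the other members, so a Gram basis turns `S_ι`
into a group of isometries generated by transvections. For the minus-type form with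
`n ≡ 6 (mod 8)` there is a Gram basis with `q = 0`: explicitly for `n = 6`, and adding four
hyperbolic planes extends one of size `n` to one of size `n + 8`.

Conversely, an embedding of `S_{n+1}` sends the transpositions `(0 k)` to transvections
`t_{v k}` with `Q (v k) = 1`; they do not commute, so `B (v k) (v l) ≠ 0`, and `v` is a Gram
basis with `q = 1`. In a Gram basis `Q (∑_{i ∈ s} u i) = q |s| + C(|s|, 2)`; as `n ≡ 2 (mod 4)`,
`C(|s| + 1, 2)` and `C(|sᶜ|, 2)` have opposite parities, so the existence of Gram bases with
both values forces `∑ₓ (-1)^{Q x} = 0`. For the minus-type form this sum is `-2^{n/2}`.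
-/

open Finset QuadraticMap Module

theorem LinearMap.transvection.comp_comm {R V : Type*} [CommRing R] [AddCommGroup V] [Module R V]
    {f g : Dual R V} {v w : V} (hfw : f w = 0) (hgv : g v = 0) :
    LinearMap.transvection f v ∘ₗ LinearMap.transvection g w =
      LinearMap.transvection g w ∘ₗ LinearMap.transvection f v := by
  ext x
  simp only [LinearMap.comp_apply, LinearMap.transvection.apply, map_add, map_smul, hfw, hgv,
    zero_smul, add_zero]
  abel

theorem QuadraticMap.Isometry.polar_map_map {R M M' : Type*} [CommRing R] [AddCommGroup M]
    [Module R M] [AddCommGroup M'] [Module R M'] {Q : QuadraticForm R M}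
    {Q' : QuadraticForm R M'} (f : Q →qᵢ Q') (x y : M) :
    polar Q' (f x) (f y) = polar Q x y := by
  simp only [polar, ← map_add, f.map_app]

theorem LinearIndependent.injective_finsetSum {R M ι : Type*} [Semiring R] [Nontrivial R]
    [AddCommMonoid M] [Module R M] [Fintype ι] {u : ι → M} (hu : LinearIndependent R u) :
    Function.Injective fun s : Finset ι => ∑ i ∈ s, u i := fun s t hst => by
  classical
  have hind : ∀ s : Finset ι, ∑ i ∈ s, u i = ∑ i, (if i ∈ s then 1 else 0 : R) • u i :=
    fun s => by simp [ite_smul]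
  have := Fintype.linearIndependent_iffₛ.mp hu _ _ ((hind s).symm.trans (hst.trans (hind t)))
  ext i
  have := this i
  split_ifs at this with hs ht ht <;> simp [hs, ht] at this ⊢

structure IsGramFamily {R M ι : Type*} [CommRing R] [AddCommGroup M] [Module R M]
    (Q : QuadraticForm R M) (q : R) (u : ι → M) : Prop where
  apply_eq : ∀ i, Q (u i) = q
  polar_eq_one : Pairwise fun i j => polar Q (u i) (u j) = 1

namespace IsGramFamily

section CommRing

variable {R M ι κ : Type*} [CommRing R] [AddCommGroup M] [Module R M]
  {Q : QuadraticForm R M} {q : R} {u : ι → M}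

theorem comp (hu : IsGramFamily Q q u) {e : κ → ι} (he : Function.Injective e) :
    IsGramFamily Q q (u ∘ e) :=
  ⟨fun _ => hu.apply_eq _, fun _ _ hij => hu.polar_eq_one (he.ne hij)⟩

theorem map {M' : Type*} [AddCommGroup M'] [Module R M'] {Q' : QuadraticForm R M'}
    (hu : IsGramFamily Q q u) (f : Q →qᵢ Q') : IsGramFamily Q' q (f ∘ u) :=
  ⟨fun i => (f.map_app _).trans (hu.apply_eq i),
    fun _ _ hij => (f.polar_map_map _ _).trans (hu.polar_eq_one hij)⟩

theorem prod_sumElim {M' : Type*} [AddCommGroup M'] [Module R M'] {Q' : QuadraticForm R M'}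
    {p : κ → M'} {h : M'} (hp : IsGramFamily Q' q p) (hh : Q' h = 0)
    (hph : ∀ k, polar Q' (p k) h = 1) (hu : IsGramFamily Q q u) :
    IsGramFamily (Q'.prod Q) q (Sum.elim (fun k => (p k, 0)) fun i => (h, u i)) := by
  have hhh : polar Q' h h = 0 := by rw [polar_self, hh, smul_zero]
  constructor
  · rintro (k | i) <;> simp [hp.apply_eq, hu.apply_eq, hh]
  · rintro (k | i) (l | j) hne
    · simp [hp.polar_eq_one fun hkl => hne (congrArg _ hkl)]
    · simp [hph]
    · simp [polar_comm _ h, hph]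
    · simp [hhh, hu.polar_eq_one fun hij => hne (congrArg _ hij)]

theorem map_sum (hu : IsGramFamily Q q u) (s : Finset ι) :
    Q (∑ i ∈ s, u i) = q * #s + ((#s).choose 2 : R) := by
  induction s using Finset.cons_induction with
  | empty => simp
  | cons a s ha ih =>
    have hpolar : polar Q (u a) (∑ i ∈ s, u i) = #s := by
      rw [← polarBilin_apply_apply, _root_.map_sum]
      simp only [polarBilin_apply_apply]
      rw [Finset.sum_congr rfl fun i hi => hu.polar_eq_one (ne_of_mem_of_not_mem hi ha).symm]
      simp
    rw [sum_cons, QuadraticMap.map_add Q, ih, hpolar, hu.apply_eq, card_cons,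
      Nat.choose_succ_succ', Nat.choose_one_right]
    push_cast
    ring

theorem polar_eq_ite [DecidableEq ι] (hu : IsGramFamily Q q u) (i j : ι) :
    polar Q (u i) (u j) = if i = j then 2 * q else 1 := by
  split_ifs with hij
  · rw [hij, polar_self, hu.apply_eq, nsmul_eq_mul, Nat.cast_ofNat]
  · exact hu.polar_eq_one hij

end CommRing

section CharTwo

variable {R M ι : Type*} [CommRing R] [CharP R 2] [AddCommGroup M] [Module R M]
  {Q : QuadraticForm R M} {q : R} {u : ι → M}

theorem apply_add (hu : IsGramFamily Q q u) {i j : ι} (hij : i ≠ j) : Q (u i + u j) = 1 := by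
  rw [QuadraticMap.map_add Q, hu.apply_eq, hu.apply_eq, hu.polar_eq_one hij,
    CharTwo.add_self_eq_zero, zero_add]

theorem linearIndependent [Fintype ι] (hu : IsGramFamily Q q u) (hι : Even (Fintype.card ι)) :
    LinearIndependent R u := by
  classical
  rw [Fintype.linearIndependent_iff]
  intro g hg
  have hpair : ∀ k, g k = ∑ i, g i := fun k => by
    have := congrArg (fun x => polarBilin Q x (u k)) hg
    simp only [_root_.map_sum, map_smul, LinearMap.sum_apply, LinearMap.smul_apply,
      polarBilin_apply_apply, hu.polar_eq_ite, CharTwo.two_eq_zero, zero_mul, map_zero,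
      LinearMap.zero_apply, smul_eq_mul, mul_ite, mul_zero, mul_one, Finset.sum_ite,
      sum_const_zero, zero_add, Finset.filter_ne', Finset.sum_erase_eq_sub (mem_univ _)] at this
    exact (sub_eq_zero.mp this).symm
  have hsum : ∑ i, g i = 0 := by
    rw [Finset.sum_congr rfl fun k _ => hpair k, sum_const, card_univ, nsmul_eq_mul,
      (CharP.cast_eq_zero_iff R 2 _).mpr (even_iff_two_dvd.mp hι), zero_mul]
  exact fun i => (hpair i).trans hsum

theorem transvection_apply [DecidableEq ι] (hu : IsGramFamily Q q u) {i j : ι} (hij : i ≠ j)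
    (k : ι) :
    LinearMap.transvection ((polarBilin Q).flip (u i + u j)) (u i + u j) (u k) =
      u (Equiv.swap i j k) := by
  have two : ∀ x : M, x + x = 0 := fun x => by
    rw [← two_smul R x, CharTwo.two_eq_zero, zero_smul]
  simp only [LinearMap.transvection.apply, LinearMap.flip_apply, polarBilin_apply_apply,
    polar_add_right, hu.polar_eq_ite, CharTwo.two_eq_zero, zero_mul]
  rcases eq_or_ne k i with rfl | hki
  · simp [hij, ← add_assoc, two]
  rcases eq_or_ne k j with rfl | hkj
  · simp [hki, add_left_comm, two]
  · simp [hki, hkj, CharTwo.add_self_eq_zero, Equiv.swap_apply_of_ne_of_ne hki hkj]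

end CharTwo

section Field

variable {K M ι : Type*} [Field K] [CharP K 2] [AddCommGroup M] [Module K M]
  [FiniteDimensional K M] {Q : QuadraticForm K M} {q : K} {u : ι → M}

theorem exists_injective_transvection_hom [Fintype ι] [DecidableEq ι] (hu : IsGramFamily Q q u)
    (hι : Even (Fintype.card ι)) (hcard : Fintype.card ι = finrank K M) :
    ∃ ψ : Equiv.Perm ι →* (M ≃ₗ[K] M), Function.Injective ψ ∧ ∀ i j, i ≠ j →
      (ψ (Equiv.swap i j) : M →ₗ[K] M) =
        LinearMap.transvection ((polarBilin Q).flip (u i + u j)) (u i + u j) := by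
  let b := basisOfLinearIndependentOfCardEqFinrank' u (hu.linearIndependent hι) hcard
  have hb : ⇑b = u := coe_basisOfLinearIndependentOfCardEqFinrank' ..
  let ψ : Equiv.Perm ι →* (M ≃ₗ[K] M) :=
    { toFun := fun σ => b.equiv b σ
      map_one' := b.equiv_refl
      map_mul' := fun σ τ => b.ext' fun i => by simp [Basis.equiv_apply] }
  refine ⟨ψ, fun σ τ h => Equiv.ext fun i => b.injective ?_, fun i j hij => b.ext fun k => ?_⟩
  · simpa [ψ, Basis.equiv_apply] using congrArg (fun f : M ≃ₗ[K] M => f (b i)) h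
  · change b.equiv b (Equiv.swap i j) (b k) = _
    rw [Basis.equiv_apply, hb, hu.transvection_apply hij]

end Field

end IsGramFamily

def sgn (a : ZMod 2) : ℤ := ((-1 : ℤˣ) ^ a : ℤˣ)

theorem sgn_add (a b : ZMod 2) : sgn (a + b) = sgn a * sgn b := by
  simp [sgn, uzpow_add]

theorem sgn_one : sgn 1 = -1 := by
  simp [sgn]

theorem Nat.even_choose_two_iff (c : ℕ) : Even (c.choose 2) ↔ c % 4 < 2 := by
  induction c with
  | zero => simp
  | succ c ih =>
    rw [Nat.choose_succ_succ', Nat.choose_one_right, Nat.even_add, ih, Nat.even_iff]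
    omega

theorem cast_choose_two_succ_eq {n c : ℕ} (hn : n % 4 = 2) (hc : c ≤ n) :
    ((c + 1).choose 2 : ZMod 2) = (n - c).choose 2 + 1 := by
  have h₁ := Nat.even_choose_two_iff (c + 1)
  have h₂ := Nat.even_choose_two_iff (n - c)
  rw [Nat.even_iff] at h₁ h₂
  rw [← Nat.cast_succ, ZMod.natCast_eq_natCast_iff']
  omega

namespace IsGramFamily

variable {M ι : Type*} [AddCommGroup M] [Module (ZMod 2) M] [Fintype M] [Fintype ι]
  {Q : QuadraticForm (ZMod 2) M}

theorem sum_sgn_eq {q : ZMod 2} {u : ι → M} (hu : IsGramFamily Q q u)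
    (hι : Even (Fintype.card ι)) (hcard : Fintype.card ι = finrank (ZMod 2) M) :
    ∑ x, sgn (Q x) = ∑ s : Finset ι, sgn (q * #s + (#s).choose 2) := by
  have hbij : Function.Bijective fun s : Finset ι => ∑ i ∈ s, u i := by
    refine (Fintype.bijective_iff_injective_and_card _).mpr
      ⟨(hu.linearIndependent hι).injective_finsetSum, ?_⟩
    rw [Fintype.card_finset, Module.card_eq_pow_finrank (K := ZMod 2) (V := M), ZMod.card, hcard]
  exact (Fintype.sum_bijective _ hbij _ _ fun s => by rw [hu.map_sum]).symm

theorem sum_sgn_eq_zero [DecidableEq ι] {u v : ι → M} (hu : IsGramFamily Q 0 u)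
    (hv : IsGramFamily Q 1 v) (hι : Fintype.card ι % 4 = 2)
    (hcard : Fintype.card ι = finrank (ZMod 2) M) :
    ∑ x, sgn (Q x) = 0 := by
  have heven : Even (Fintype.card ι) := Nat.even_iff.mpr (by omega)
  have h0 := hu.sum_sgn_eq heven hcard
  have h1 := hv.sum_sgn_eq heven hcard
  simp only [zero_mul, zero_add] at h0
  have hflip : ∀ s : Finset ι, sgn (1 * #s + (#s).choose 2) = -sgn ((#sᶜ).choose 2) :=
    fun s => by
      have hsucc : ((#s + 1).choose 2 : ZMod 2) = #s + (#s).choose 2 := by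
        rw [Nat.choose_succ_succ', Nat.choose_one_right, Nat.cast_add]
      rw [one_mul, ← hsucc, cast_choose_two_succ_eq hι (card_le_univ s), sgn_add, sgn_one,
        card_compl, mul_neg_one]
  rw [Finset.sum_congr rfl fun s _ => hflip s, Finset.sum_neg_distrib,
    Fintype.sum_bijective _ compl_involutive.bijective _ (fun s => sgn ((#s).choose 2))
      fun s => rfl, ← h0] at h1
  omega

end IsGramFamily

theorem polarForm_eq_polar {n : ℕ} (Q : (Fin n → ZMod 2) → ZMod 2) : polarForm Q = polar Q := by
  ext x y
  simp [polarForm, polar, sub_eq_add_neg, ZMod.neg_eq_self_mod_two]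

def minusForm (n : ℕ) (hn : 2 ≤ n) : QuadraticForm (ZMod 2) (Fin n → ZMod 2) :=
  (∑ i : Fin (n / 2 - 1),
      proj ⟨2 * i.1, by have := i.2; omega⟩ ⟨2 * i.1 + 1, by have := i.2; omega⟩) +
    proj ⟨n - 2, by omega⟩ ⟨n - 2, by omega⟩ + proj ⟨n - 2, by omega⟩ ⟨n - 1, by omega⟩ +
    proj ⟨n - 1, by omega⟩ ⟨n - 1, by omega⟩

theorem coe_minusForm (n : ℕ) (hn : 2 ≤ n) : ⇑(minusForm n hn) = Qform n hn := by
  ext x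
  simp [minusForm, Qform, _root_.sq]

theorem Qform_vecCons_vecCons (m : ℕ) (a b : ZMod 2) (y : Fin (m + 2) → ZMod 2) :
    Qform (m + 4) (by omega) (Matrix.vecCons a (Matrix.vecCons b y)) =
      a * b + Qform (m + 2) (by omega) y := by
  simp only [Qform]
  rw [← Fin.sum_congr' _ (show (m + 2) / 2 - 1 + 1 = (m + 4) / 2 - 1 by omega),
    Fin.sum_univ_succ]
  simp only [Fin.val_cast, Fin.val_succ, Fin.val_zero, add_assoc]
  -- `vecCons a (vecCons b y) ⟨k + 2, _⟩` reduces to `y ⟨k, _⟩`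
  rfl

theorem Fintype.sum_pi_fin_succ {α S : Type*} [Fintype α] [AddCommMonoid S] {n : ℕ}
    (f : (Fin (n + 1) → α) → S) : ∑ x, f x = ∑ a, ∑ y, f (Matrix.vecCons a y) := by
  rw [← (Fin.consEquiv fun _ => α).sum_comp, Fintype.sum_prod_type]
  rfl

theorem sum_sgn_Qform {n : ℕ} (hn : 2 ≤ n) (he : Even n) :
    ∑ x, sgn (Qform n hn x) = -2 ^ (n / 2) := by
  obtain ⟨k, rfl⟩ : ∃ k, n = 2 * k + 2 := ⟨n / 2 - 1, by rcases he with ⟨r, rfl⟩; omega⟩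
  rw [show (2 * k + 2) / 2 = k + 1 by omega]
  clear he
  induction k with
  | zero => change ∑ x, sgn (Qform 2 le_rfl x) = -2 ^ 1; decide
  | succ k ih =>
    change ∑ x, sgn (Qform (2 * k + 4) (by omega) x) = _
    have hplane : ∑ a : ZMod 2, ∑ b : ZMod 2, sgn (a * b) = 2 := by decide
    simp only [Fintype.sum_pi_fin_succ (n := 2 * k + 3), Fintype.sum_pi_fin_succ (n := 2 * k + 2),
      Qform_vecCons_vecCons, sgn_add, ← Finset.mul_sum, ← Finset.sum_mul,
      ih (by omega), hplane]
    ring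

def hyperbolic8 : QuadraticForm (ZMod 2) (Fin 8 → ZMod 2) :=
  proj 0 1 + proj 2 3 + proj 4 5 + proj 6 7

theorem coe_hyperbolic8 :
    ⇑hyperbolic8 = fun a => a 0 * a 1 + a 2 * a 3 + a 4 * a 5 + a 6 * a 7 := by
  ext a
  simp [hyperbolic8]

open Matrix in
def consHyperbolic8 (m : ℕ) :
    hyperbolic8.prod (minusForm (m + 2) (by omega)) →qᵢ minusForm (m + 10) (by omega) where
  toFun p := vecCons (p.1 0) (vecCons (p.1 1) (vecCons (p.1 2) (vecCons (p.1 3)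
    (vecCons (p.1 4) (vecCons (p.1 5) (vecCons (p.1 6) (vecCons (p.1 7) p.2)))))))
  map_add' p p' := by simp
  map_smul' c p := by simp [smul_cons]
  map_app' p := by
    simp only [coe_minusForm, QuadraticMap.prod_apply, coe_hyperbolic8]
    rw [Qform_vecCons_vecCons (m + 6), Qform_vecCons_vecCons (m + 4),
      Qform_vecCons_vecCons (m + 2), Qform_vecCons_vecCons m]
    ring

def gramBasis6 : Fin 6 → Fin 6 → ZMod 2 :=
  ![![0,0,0,1,0,0], ![0,0,1,0,0,0], ![0,0,1,1,0,1],
    ![0,0,1,1,1,0], ![0,1,1,1,1,1], ![1,0,1,1,1,1]]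

def gramFamily8 : Fin 8 → Fin 8 → ZMod 2 :=
  ![![0,0,0,0,0,0,0,1], ![0,0,0,0,0,0,1,0], ![0,0,0,0,1,1,1,1], ![0,0,1,1,0,1,1,1],
    ![0,1,1,1,1,0,1,1], ![1,0,1,1,1,0,1,1], ![1,1,0,0,1,0,1,1], ![1,1,0,1,0,1,1,1]]

def gramApex8 : Fin 8 → ZMod 2 := ![1,1,1,0,0,1,1,1]

theorem isGramFamily_gramBasis6 : IsGramFamily (minusForm 6 (by omega)) 0 gramBasis6 := by
  constructor
  · rw [coe_minusForm]; decide
  · unfold Pairwise; rw [coe_minusForm]; decide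

theorem isGramFamily_gramFamily8 : IsGramFamily hyperbolic8 0 gramFamily8 := by
  constructor
  · rw [coe_hyperbolic8]; decide
  · unfold Pairwise; rw [coe_hyperbolic8]; decide

theorem hyperbolic8_gramApex8 : hyperbolic8 gramApex8 = 0 := by
  rw [coe_hyperbolic8]; decide

theorem polar_gramFamily8_gramApex8 : ∀ k, polar hyperbolic8 (gramFamily8 k) gramApex8 = 1 := by
  rw [coe_hyperbolic8]; decide

theorem exists_isGramFamily_minusForm (t : ℕ) :
    ∃ u : Fin (8 * t + 6) → Fin (8 * t + 6) → ZMod 2,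
      IsGramFamily (minusForm (8 * t + 6) (by omega)) 0 u := by
  induction t with
  | zero => exact ⟨gramBasis6, isGramFamily_gramBasis6⟩
  | succ t ih =>
    obtain ⟨u, hu⟩ := ih
    let e : Fin (8 * t + 14) ≃ Fin 8 ⊕ Fin (8 * t + 6) :=
      (finSumFinEquiv (m := 8 * t + 6) (n := 8)).symm.trans (Equiv.sumComm _ _)
    have hsum := isGramFamily_gramFamily8.prod_sumElim hyperbolic8_gramApex8
      polar_gramFamily8_gramApex8 hu
    exact ⟨_, (hsum.map (consHyperbolic8 (8 * t + 4))).comp e.injective⟩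

theorem isGramFamily_of_star_transvections {M : Type*} [AddCommGroup M] [Module (ZMod 2) M]
    {Q : QuadraticForm (ZMod 2) M} {n : ℕ} (ψ : Equiv.Perm (Fin (n + 1)) →* (M ≃ₗ[ZMod 2] M))
    (hψ : Function.Injective ψ) {v : Fin n → M} (hv : ∀ k, Q (v k) = 1)
    (hψv : ∀ k, (ψ (Equiv.swap 0 k.succ) : M →ₗ[ZMod 2] M) =
      LinearMap.transvection ((polarBilin Q).flip (v k)) (v k)) :
    IsGramFamily Q 1 v := by
  refine ⟨hv, fun k l hkl => ?_⟩
  by_contra hne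
  have h0 : polar Q (v k) (v l) = 0 := (by decide : ∀ a : ZMod 2, a ≠ 1 → a = 0) _ hne
  have hcomm : ψ (Equiv.swap 0 k.succ * Equiv.swap 0 l.succ) =
      ψ (Equiv.swap 0 l.succ * Equiv.swap 0 k.succ) := by
    rw [map_mul, map_mul]
    refine LinearEquiv.ext fun w => ?_
    have := LinearMap.congr_fun (LinearMap.transvection.comp_comm
      (f := (polarBilin Q).flip (v k)) (g := (polarBilin Q).flip (v l)) (v := v k) (w := v l)
      (by simpa [polar_comm] using h0) (by simpa using h0)) w
    simpa only [LinearMap.comp_apply, ← hψv, LinearEquiv.coe_coe, LinearEquiv.mul_apply]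
      using this
  have := congrArg (· 0) (hψ hcomm)
  simp [Equiv.swap_apply_of_ne_of_ne, Fin.succ_ne_zero, hkl, Ne.symm hkl] at this

/-- φ(O_n^{-}(2)) = n when n ≡ 6 (mod 8): S_n embeds with transpositions going to orthogonal transvections t_v with Q(v) = 1, while S_{n+1} does not. -/
theorem phi_O_minus_2_mod8_six (n : ℕ) (hmod : n % 8 = 6) :
    (∃ ψ : Equiv.Perm (Fin (n)) →* ((Fin n → ZMod 2) ≃ₗ[ZMod 2] (Fin n → ZMod 2)),
      Function.Injective ψ ∧
      ∀ τ : Equiv.Perm (Fin (n)), τ.IsSwap →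
        ∃ v : Fin n → ZMod 2, Qform n (by omega) v = 1 ∧
          ∀ w, (ψ τ) w = w + polarForm (Qform n (by omega)) w v • v) ∧
    ¬ (∃ ψ : Equiv.Perm (Fin (n + 1)) →* ((Fin n → ZMod 2) ≃ₗ[ZMod 2] (Fin n → ZMod 2)),
      Function.Injective ψ ∧
      ∀ τ : Equiv.Perm (Fin (n + 1)), τ.IsSwap →
        ∃ v : Fin n → ZMod 2, Qform n (by omega) v = 1 ∧
          ∀ w, (ψ τ) w = w + polarForm (Qform n (by omega)) w v • v) := by
  obtain ⟨t, rfl⟩ : ∃ t, n = 8 * t + 6 := ⟨n / 8, by omega⟩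
  have hn : 2 ≤ 8 * t + 6 := by omega
  obtain ⟨u, hu⟩ := exists_isGramFamily_minusForm t
  have hcard : Fintype.card (Fin (8 * t + 6)) = finrank (ZMod 2) (Fin (8 * t + 6) → ZMod 2) := by
    simp
  have hpolar : polarForm (Qform _ hn) = polar (minusForm _ hn) := by
    rw [polarForm_eq_polar, coe_minusForm]
  constructor
  · obtain ⟨ψ, hψ, hswap⟩ :=
      hu.exists_injective_transvection_hom (Nat.even_iff.mpr (by rw [Fintype.card_fin]; omega))
        hcard
    refine ⟨ψ, hψ, ?_⟩
    rintro _ ⟨i, j, hij, rfl⟩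
    refine ⟨u i + u j, by rw [← coe_minusForm]; exact hu.apply_add hij, fun w => ?_⟩
    rw [hpolar]
    exact LinearMap.congr_fun (hswap i j hij) w
  · rintro ⟨ψ, hψ, hswap⟩
    choose v hv hψv using fun k : Fin (8 * t + 6) =>
      hswap _ ⟨0, k.succ, (Fin.succ_ne_zero k).symm, rfl⟩
    have hvGram : IsGramFamily (minusForm _ hn) 1 v :=
      isGramFamily_of_star_transvections ψ hψ (fun k => by rw [coe_minusForm]; exact hv k)
        fun k => LinearMap.ext fun w => by rw [LinearEquiv.coe_coe, hψv, hpolar]; rfl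
    have hzero := hu.sum_sgn_eq_zero hvGram (by rw [Fintype.card_fin]; omega) hcard
    rw [coe_minusForm, sum_sgn_Qform hn (Nat.even_iff.mpr (by omega))] at hzero
    exact neg_ne_zero.mpr (pow_ne_zero _ two_ne_zero) hzero
end

section
/- Let n ≥ 10 be even with n ≡ 2 (mod 8), and let V = (Fin n → ZMod 2) with the minus-type quadratic form Q(x) = Σ_{i=1}^{n/2−1} x_{2i−1} x_{2i} + x_{n−1}² + x_{n−1} x_n + x_n² and its polar bilinear form B(x,y) = Q(x+y) + Q(x) + Q(y). Then: (a) there exists an injective group homomorphism ψ from the symmetric group S_{n+2} to the group of linear automorphisms of V such that for every transposition τ ∈ S_{n+2}, ψ(τ) is an orthogonal transvection t_v for some v ∈ V with Q(v) = 1; and (b) there is no injective group homomorphism from S_{n+3} to the linear automorphisms of V sending every transposition to such a transvection. (Equivalently, φ(O_n^{−}(2)) = n+2 when n ≡ 2 (mod 8).) -/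
/-!
The embedding is the classical model of `O^-_n(2)`: on the even-weight vectors of
`(ZMod 2)^(n+2)` modulo the all-ones vector, `x ↦ wt(x)/2 mod 2` is a quadratic form of minus type
when `n ≡ 2 mod 8`, coordinate permutations preserve it, and the transposition `(a b)` acts as the
transvection along `e_a + e_b`. Rather than identifying this quotient with `(ZMod 2)^n` abstractly,
we exhibit the images `u_k` of `e_k + e_{n+1}`: `u_{n+1} = 0`, `u_n = ∑_{a<n} u_a`, and for `a < n`
`u_a = e_a + ∑_j λ(a/2, j) (e_{2j} + e_{2j+1})`, where `λ` is a tournament on the `n/2` hyperbolic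
pairs. Then `B(u_a, u_b) = λ(a/2, b/2) + λ(b/2, a/2) = 1` for `a/2 ≠ b/2`, and `Q(u_a)` is
`Q(e_a)` plus the out-degree of `a/2`, so the out-degree parities of `λ` make every `u_a`
nonsingular. The `u_a` with `a < n` form a basis, which gives a section of `x ↦ ∑ x_k u_k`.

Conversely, the images of the adjacent transpositions `(i, i+1)`, `i ≤ n + 1`, of `S_{n+3}` are
transvections `t_{v_i}`. Two transvections with distinct nonzero vectors commute iff the vectors
are orthogonal, so the Gram matrix of `v_0, …, v_{n+1}` is the adjacency matrix of a path on
`n + 2` vertices, which is invertible mod 2 since `n + 2` is even: `n + 2` independent vectors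
in dimension `n`.
-/

open Finset Equiv

namespace PhiOMinus

lemma zmod_two_cases (a : ZMod 2) : a = 0 ∨ a = 1 := by revert a; decide

lemma add_self_eq_zero_of_zmod_two {V : Type*} [AddCommGroup V] [Module (ZMod 2) V] (v : V) :
    v + v = 0 := by
  rw [← two_smul (ZMod 2), show (2 : ZMod 2) = 0 from rfl, zero_smul]

lemma isAlt_comm {V : Type*} [AddCommGroup V] [Module (ZMod 2) V]
    {B : LinearMap.BilinForm (ZMod 2) V} (hB : B.IsAlt) (x y : V) : B x y = B y x := by
  rw [← hB.neg_eq, ZMod.neg_eq_self_mod_two]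

section Quadratic

variable {V : Type*} [AddCommGroup V] [Module (ZMod 2) V] {Q : V → ZMod 2}
  {B : LinearMap.BilinForm (ZMod 2) V}

lemma quadratic_zero (hQ : ∀ x y, Q (x + y) = Q x + Q y + B x y) : Q 0 = 0 := by
  simpa [CharTwo.add_self_eq_zero] using hQ 0 0

lemma quadratic_smul (hQ : ∀ x y, Q (x + y) = Q x + Q y + B x y) (c : ZMod 2) (x : V) :
    Q (c • x) = c * Q x := by
  rcases zmod_two_cases c with rfl | rfl
  · simp [quadratic_zero hQ]
  · simp

lemma quadratic_sum (hQ : ∀ x y, Q (x + y) = Q x + Q y + B x y) {ι : Type*} [DecidableEq ι]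
    (s : Finset ι) (v : ι → V) (c : ZMod 2)
    (hv : ∀ i ∈ s, ∀ j ∈ s, i ≠ j → B (v i) (v j) = c) :
    Q (∑ i ∈ s, v i) = ∑ i ∈ s, Q (v i) + (#s).choose 2 * c := by
  induction s using Finset.induction_on with
  | empty => simp [quadratic_zero hQ]
  | insert a s ha ih =>
    have hB : B (v a) (∑ i ∈ s, v i) = #s * c := by
      rw [map_sum, sum_congr rfl fun i hi => hv a (mem_insert_self a s) i
        (mem_insert_of_mem hi) (fun h => ha (h ▸ hi)), sum_const, nsmul_eq_mul]
    rw [sum_insert ha, hQ, hB, ih fun i hi j hj => hv i (mem_insert_of_mem hi) j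
      (mem_insert_of_mem hj), sum_insert ha, card_insert_of_notMem ha, Nat.choose_succ_succ',
      Nat.choose_one_right]
    push_cast
    ring

end Quadratic

section Gram

variable {V : Type*} [AddCommGroup V] [Module (ZMod 2) V]

lemma linearIndependent_of_gram_eq_one_sub {ι : Type*} [Fintype ι] [DecidableEq ι]
    (B : LinearMap.BilinForm (ZMod 2) V) (hι : Even (Fintype.card ι)) (v : ι → V)
    (hv : ∀ i j, B (v i) (v j) = if i = j then 0 else 1) : LinearIndependent (ZMod 2) v := by
  rw [Fintype.linearIndependent_iff]
  intro g hg
  have hrow (k : ι) : g k = ∑ i, g i := by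
    have h := congrArg (B (v k)) hg
    simp only [map_sum, map_smul, hv, smul_eq_mul, mul_ite, mul_zero, mul_one, map_zero] at h
    have hsplit (x : ι) : (if k = x then 0 else g x) = g x + if k = x then g x else 0 := by
      split_ifs <;> simp [CharTwo.add_self_eq_zero]
    rw [sum_congr rfl fun x _ => hsplit x, sum_add_distrib,
      sum_ite_eq, if_pos (mem_univ k)] at h
    exact (CharTwo.add_eq_zero.mp h).symm
  have hsum : ∑ i, g i = 0 := by
    conv_lhs => rw [sum_congr rfl fun i _ => hrow i]
    rw [sum_const, card_univ, nsmul_eq_mul, hι.natCast_zmod_two, zero_mul]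
  intro i
  rw [hrow i, hsum]

lemma linearIndependent_of_path_gram (B : LinearMap.BilinForm (ZMod 2) V) {m : ℕ}
    (hm : Even m) (v : Fin m → V)
    (hv : ∀ i j, B (v i) (v j) = if (i : ℕ) + 1 = j ∨ (j : ℕ) + 1 = i then 1 else 0) :
    LinearIndependent (ZMod 2) v := by
  rw [Fintype.linearIndependent_iff]
  intro g hg
  -- `H (i + 1) = g i`, padded with `H 0 = H (m + 1) = 0`
  set H : ℕ → ZMod 2 := fun t => ∑ i : Fin m, if (i : ℕ) + 1 = t then g i else 0 with hH
  have hg_eq (i : Fin m) : g i = H (i + 1) := by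
    simp only [hH, add_left_inj, ← Fin.ext_iff, Fintype.sum_ite_eq']
  have hstep (k : ℕ) (hk : k < m) : H (k + 2) = H k := by
    have h := congrArg (B (v ⟨k, hk⟩)) hg
    simp only [map_sum, map_smul, hv, smul_eq_mul, map_zero] at h
    have hsplit (i : Fin m) : g i * (if k + 1 = i ∨ (i : ℕ) + 1 = k then 1 else 0) =
        (if (i : ℕ) + 1 = k then g i else 0) + (if (i : ℕ) + 1 = k + 2 then g i else 0) := by
      split_ifs <;> first | omega | simp
    rw [sum_congr rfl fun i _ => hsplit i, sum_add_distrib] at h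
    exact (CharTwo.add_eq_zero.mp h).symm
  have hmod (t : ℕ) (ht : t ≤ m + 1) : H t = H (t % 2) := by
    induction t using Nat.strong_induction_on with
    | _ t ih =>
      rcases Nat.lt_or_ge t 2 with h | h
      · rw [Nat.mod_eq_of_lt h]
      · obtain ⟨k, rfl⟩ := Nat.exists_eq_add_of_le' h
        rw [hstep k (by omega), ih k (by omega) (by omega), Nat.add_mod_right]
  have hH0 : H 0 = 0 := by simp [hH]
  have hH1 : H 1 = 0 := by
    have hlast : H (m + 1) = 0 := sum_eq_zero fun i _ => if_neg (by omega)
    rwa [hmod (m + 1) le_rfl, Nat.odd_iff.mp hm.add_one] at hlast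
  intro i
  rw [hg_eq, hmod _ (by omega)]
  rcases Nat.mod_two_eq_zero_or_one (i + 1) with h | h <;> rw [h] <;> assumption

end Gram

lemma swap_castSucc_succ_injective {m : ℕ} :
    Function.Injective fun i : Fin m => swap i.castSucc i.succ := by
  rintro ⟨i, hi⟩ ⟨j, hj⟩ h
  have h' := congrArg (· (⟨i, by omega⟩ : Fin (m + 1))) h
  simp only [Fin.castSucc_mk, Fin.succ_mk, swap_apply_def, Fin.mk.injEq] at h'
  ext
  split_ifs at h' <;> simp only [Fin.mk.injEq] at * <;> omega

lemma commute_swap_castSucc_succ_iff {m : ℕ} {i j : Fin m} (hij : i ≠ j) :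
    Commute (swap i.castSucc i.succ) (swap j.castSucc j.succ) ↔
      ¬((i : ℕ) + 1 = j ∨ (j : ℕ) + 1 = i) := by
  obtain ⟨i, hi⟩ := i
  obtain ⟨j, hj⟩ := j
  simp only [Fin.castSucc_mk, Fin.succ_mk, ne_eq, Fin.mk.injEq] at hij ⊢
  constructor
  · rintro h hadj
    have h' := congrArg (· (⟨min i j, by omega⟩ : Fin (m + 1))) h.eq
    simp only [Perm.mul_apply, swap_apply_def] at h'
    split_ifs at h' <;> simp only [Fin.mk.injEq] at * <;> omega
  · intro hfar
    refine Perm.Disjoint.commute (Perm.disjoint_swap_swap ?_)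
    simp only [List.nodup_cons, List.mem_cons, List.not_mem_nil, Fin.mk.injEq, List.nodup_nil,
      or_false, not_false_eq_true, and_true]
    omega

section Transvection

variable {V : Type*} [AddCommGroup V] [Module (ZMod 2) V]

def transvection (B : LinearMap.BilinForm (ZMod 2) V) (v w : V) : V := w + B w v • v

lemma transvection_comm_iff {B : LinearMap.BilinForm (ZMod 2) V} (hB : B.IsAlt)
    (hnd : B.SeparatingLeft) {u v : V} (hu : u ≠ 0) (huv : u ≠ v) :
    (∀ w, transvection B u (transvection B v w) = transvection B v (transvection B u w)) ↔
      B u v = 0 := by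
  simp only [transvection, map_add, map_smul, smul_eq_mul, LinearMap.add_apply,
    LinearMap.smul_apply, isAlt_comm hB v u]
  constructor
  · intro h
    by_contra hc
    replace hc : B u v = 1 := (zmod_two_cases _).resolve_left hc
    obtain ⟨w, hw⟩ : ∃ w, B w u ≠ 0 := by
      by_contra! h0
      exact hu (hnd u fun w => by rw [isAlt_comm hB]; exact h0 w)
    replace hw : B w u = 1 := (zmod_two_cases _).resolve_left hw
    have hwv := h w
    rw [hw, hc] at hwv
    rcases zmod_two_cases (B w v) with h0 | h1
    · rw [h0] at hwv
      have hv : v = 0 := by simpa using hwv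
      simp [hv] at hc
    · rw [h1] at hwv
      have h2 : (1 + 1 * 1 : ZMod 2) = 0 := rfl
      simp only [h2, zero_smul, add_zero, one_smul, add_right_inj] at hwv
      exact huv hwv.symm
  · intro h w
    rw [h]
    simp only [mul_zero, add_zero]
    abel

theorem not_exists_injective_transvection_hom [Module.Finite (ZMod 2) V]
    {B : LinearMap.BilinForm (ZMod 2) V} (hB : B.IsAlt) (hnd : B.SeparatingLeft) {m : ℕ}
    (hm : Even m) (hdim : Module.finrank (ZMod 2) V < m) :
    ¬∃ ψ : Perm (Fin (m + 1)) →* (V ≃ₗ[ZMod 2] V), Function.Injective ψ ∧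
      ∀ τ : Perm (Fin (m + 1)), τ.IsSwap → ∃ v, ∀ w, ψ τ w = transvection B v w := by
  rintro ⟨ψ, hψ, hswap⟩
  set τ : Fin m → Perm (Fin (m + 1)) := fun i => swap i.castSucc i.succ
  have hτ (i : Fin m) : (τ i).IsSwap := ⟨_, _, (Fin.castSucc_lt_succ (i := i)).ne, rfl⟩
  choose v hv using fun i => hswap (τ i) (hτ i)
  have hv0 (i : Fin m) : v i ≠ 0 := by
    intro h0
    have h1 : τ i = 1 := hψ <| by
      rw [map_one]
      ext w
      simp [hv, h0, transvection]
    exact (Fin.castSucc_lt_succ (i := i)).ne (swap_eq_one_iff.mp h1)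
  have hv_inj : Function.Injective v := fun i j h =>
    swap_castSucc_succ_injective <| hψ <| LinearEquiv.ext fun w => by rw [hv, hv, h]
  have hcomm {i j : Fin m} (hij : i ≠ j) : Commute (τ i) (τ j) ↔ B (v i) (v j) = 0 := by
    rw [← transvection_comm_iff hB hnd (hv0 i) (hv_inj.ne hij)]
    constructor
    · intro h w
      simpa [hv] using LinearEquiv.congr_fun (h.map ψ).eq w
    · refine fun h => Commute.of_map hψ (LinearEquiv.ext fun w => ?_)
      simpa [hv] using h w
  have hgram (i j : Fin m) :
      B (v i) (v j) = if (i : ℕ) + 1 = j ∨ (j : ℕ) + 1 = i then 1 else 0 := by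
    by_cases hij : i = j
    · rw [hij, hB.self_eq_zero, if_neg (by omega)]
    · have h := (hcomm hij).symm.trans (commute_swap_castSucc_succ_iff hij)
      split_ifs with hadj
      · exact (zmod_two_cases _).resolve_left fun h0 => h.mp h0 hadj
      · exact h.mpr hadj
  have hcard := (linearIndependent_of_path_gram B hm v hgram).fintype_card_le_finrank
  rw [Fintype.card_fin] at hcard
  omega

end Transvection

section PermRep

variable {N : ℕ}

def permMap (σ : Perm (Fin N)) : (Fin N → ZMod 2) →ₗ[ZMod 2] Fin N → ZMod 2 :=
  LinearMap.funLeft (ZMod 2) (ZMod 2) σ.symm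

lemma permMap_apply (σ : Perm (Fin N)) (x : Fin N → ZMod 2) (k : Fin N) :
    permMap σ x k = x (σ.symm k) := rfl

lemma permMap_mul (σ τ : Perm (Fin N)) (x : Fin N → ZMod 2) :
    permMap (σ * τ) x = permMap σ (permMap τ x) := rfl

lemma permMap_const_one (σ : Perm (Fin N)) : permMap σ 1 = 1 := rfl

lemma sum_permMap (σ : Perm (Fin N)) (x : Fin N → ZMod 2) :
    ∑ k, permMap σ x k = ∑ k, x k :=
  Equiv.sum_comp σ.symm x

lemma permMap_swap (a b : Fin N) (x : Fin N → ZMod 2) :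
    permMap (swap a b) x = x + (x a + x b) • (Pi.single a 1 + Pi.single b 1) := by
  ext k
  simp only [permMap_apply, symm_swap, swap_apply_def, Pi.add_apply, Pi.smul_apply,
    Pi.single_apply, smul_eq_mul]
  split_ifs <;> subst_vars <;> ring_nf <;> reduce_mod_char

lemma eq_one_of_permMap_add_mem (hN : 5 ≤ N) {σ : Perm (Fin N)}
    (hσ : ∀ y : Fin N → ZMod 2, ∑ k, y k = 0 → permMap σ y + y = 0 ∨ permMap σ y + y = 1) :
    σ = 1 := by
  have hpair {a b : Fin N} (hab : a ≠ b) : σ a = a ∨ σ a = b := by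
    have hy : ∑ k, (Pi.single a 1 + Pi.single b 1 : Fin N → ZMod 2) k = 0 := by
      simp [sum_add_distrib, CharTwo.add_self_eq_zero]
    obtain ⟨k, -, hk⟩ := exists_mem_notMem_of_card_lt_card (s := {a, b, σ a, σ b}) (t := univ)
      (card_le_four.trans_lt (by simpa using by omega))
    simp only [mem_insert, mem_singleton, not_or] at hk
    rcases hσ _ hy with h0 | h1
    · have := congrFun h0 (σ a)
      simp only [Pi.add_apply, permMap_apply, symm_apply_apply, Pi.single_apply, if_neg hab,
        Pi.zero_apply] at this
      split_ifs at this <;> simp_all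
    · have := congrFun h1 k
      have hka : σ.symm k ≠ a := fun h => hk.2.2.1 (by rw [← h, apply_symm_apply])
      have hkb : σ.symm k ≠ b := fun h => hk.2.2.2 (by rw [← h, apply_symm_apply])
      simp [permMap_apply, hka, hkb, hk.1, hk.2.1] at this
  ext a
  obtain ⟨b, -, hb⟩ := exists_mem_notMem_of_card_lt_card (s := {a}) (t := univ) (by simp; omega)
  obtain ⟨c, -, hc⟩ := exists_mem_notMem_of_card_lt_card (s := {a, b}) (t := univ)
    (card_le_two.trans_lt (by simp; omega))
  simp only [mem_singleton, mem_insert, not_or] at hb hc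
  rcases hpair (Ne.symm hb) with hab | hab
  · rw [hab]; rfl
  · rcases hpair (Ne.symm hc.1) with hac | hac
    · rw [hac]; rfl
    · exact absurd (hab.symm.trans hac).symm hc.2

variable {V : Type*} [AddCommGroup V] [Module (ZMod 2) V]
  {B : LinearMap.BilinForm (ZMod 2) V} {u : Fin N → V} {o : Fin N}

open Fintype (linearCombination)

variable (B u o) in
def IsPointGram : Prop :=
  ∀ k l, B (u k) (u l) =
    1 + (if k = l then 1 else 0) + (if k = o then 1 else 0) + (if l = o then 1 else 0)

lemma IsPointGram.apply_linearCombination_add (hu : IsPointGram B u o) {x : Fin N → ZMod 2}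
    (hx : ∑ k, x k = 0) (a b : Fin N) :
    B (linearCombination (ZMod 2) u x) (u a + u b) = x a + x b := by
  have hk (k : Fin N) : B (u k) (u a + u b) = (if k = a then 1 else 0) + (if k = b then 1 else 0) +
      ((if a = o then 1 else 0) + if b = o then 1 else 0) := by
    rw [map_add, hu, hu]
    linear_combination (1 + (if k = o then (1 : ZMod 2) else 0)) * CharTwo.two_eq_zero (R := ZMod 2)
  generalize ((if a = o then 1 else 0) + if b = o then 1 else 0 : ZMod 2) = c at hk
  simp only [Fintype.linearCombination_apply, LinearMap.map_sum₂, LinearMap.map_smul₂, hk,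
    smul_eq_mul, mul_add, sum_add_distrib, ← sum_mul, hx, zero_mul, add_zero]
  simp [mul_ite]

lemma IsPointGram.eq_zero_or_eq_one (hu : IsPointGram B u o)
    {x : Fin N → ZMod 2} (hx : ∑ k, x k = 0) (hLx : linearCombination (ZMod 2) u x = 0) :
    x = 0 ∨ x = 1 := by
  have hconst (k : Fin N) : x k = x o := by
    have h := hu.apply_linearCombination_add hx k o
    rw [hLx, map_zero, LinearMap.zero_apply] at h
    exact CharTwo.add_eq_zero.mp h.symm
  rcases zmod_two_cases (x o) with h | h
  · exact Or.inl (funext fun k => (hconst k).trans h)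
  · exact Or.inr (funext fun k => (hconst k).trans h)

/-- `u k` models the image of `e k + e o` in the even-weight vectors of `(ZMod 2) ^ N` modulo the
all-ones vector, and `S` is a linear section of `x ↦ ∑ k, x k • u k` by even-weight vectors. -/
structure IsPointFrame (B : LinearMap.BilinForm (ZMod 2) V) (u : Fin N → V) (o : Fin N)
    (S : V →ₗ[ZMod 2] Fin N → ZMod 2) : Prop where
  gram : IsPointGram B u o
  sum_eq_zero : ∑ k, u k = 0
  linearCombination_section : ∀ w, linearCombination (ZMod 2) u (S w) = w
  sum_section : ∀ w, ∑ k, S w k = 0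

variable {S : V →ₗ[ZMod 2] Fin N → ZMod 2}

variable (u S) in
def permRep (σ : Perm (Fin N)) : Module.End (ZMod 2) V :=
  linearCombination (ZMod 2) u ∘ₗ permMap σ ∘ₗ S

lemma IsPointFrame.permRep_linearCombination (h : IsPointFrame B u o S) (σ : Perm (Fin N))
    {x : Fin N → ZMod 2} (hx : ∑ k, x k = 0) :
    permRep u S σ (linearCombination (ZMod 2) u x) =
      linearCombination (ZMod 2) u (permMap σ x) := by
  set d := S (linearCombination (ZMod 2) u x) + x with hd
  have hdx : S (linearCombination (ZMod 2) u x) = x + d := by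
    rw [hd, add_comm, add_assoc, add_self_eq_zero_of_zmod_two, add_zero]
  have hLd : linearCombination (ZMod 2) u (permMap σ d) = 0 := by
    have hsum : ∑ k, d k = 0 := by simp [hd, sum_add_distrib, h.sum_section, hx]
    have hker : linearCombination (ZMod 2) u d = 0 := by
      rw [hd, map_add, h.linearCombination_section, add_self_eq_zero_of_zmod_two]
    rcases h.gram.eq_zero_or_eq_one hsum hker with h0 | h1
    · simp [h0]
    · simp [h1, permMap_const_one, Fintype.linearCombination_apply, h.sum_eq_zero]
  simp only [permRep, LinearMap.comp_apply, hdx, map_add, hLd, add_zero]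

def permRepHom (h : IsPointFrame B u o S) : Perm (Fin N) →* Module.End (ZMod 2) V where
  toFun := permRep u S
  map_one' := LinearMap.ext h.linearCombination_section
  map_mul' σ τ := LinearMap.ext fun w => by
    change linearCombination (ZMod 2) u (permMap (σ * τ) (S w)) =
      permRep u S σ (linearCombination (ZMod 2) u (permMap τ (S w)))
    rw [h.permRep_linearCombination σ (by rw [sum_permMap, h.sum_section]), permMap_mul]

lemma IsPointFrame.permRep_swap (h : IsPointFrame B u o S) (a b : Fin N) (w : V) :
    permRep u S (swap a b) w = transvection B (u a + u b) w := by
  have hab := h.gram.apply_linearCombination_add (h.sum_section w) a b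
  rw [h.linearCombination_section] at hab
  simp only [permRep, LinearMap.comp_apply, permMap_swap, map_add, map_smul,
    h.linearCombination_section, Fintype.linearCombination_apply_single, one_smul, hab,
    transvection]

lemma permRepHom_injective (h : IsPointFrame B u o S) (hN : 5 ≤ N) :
    Function.Injective (permRepHom h) := by
  rw [injective_iff_map_eq_one]
  intro σ hσ
  refine eq_one_of_permMap_add_mem hN fun y hy => ?_
  have hsum : ∑ k, (permMap σ y + y) k = 0 := by
    simp [sum_add_distrib, sum_permMap, hy]
  have hker : linearCombination (ZMod 2) u (permMap σ y + y) = 0 := by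
    rw [map_add, ← h.permRep_linearCombination σ hy]
    change permRepHom h σ _ + _ = 0
    rw [hσ, Module.End.one_apply, add_self_eq_zero_of_zmod_two]
  exact h.gram.eq_zero_or_eq_one hsum hker

end PermRep

section StandardForm

def symplecticForm (n : ℕ) : LinearMap.BilinForm (ZMod 2) (Fin n → ZMod 2) :=
  LinearMap.mk₂ (ZMod 2)
    (fun x y => ∑ i : Fin (n / 2), (x ⟨2 * i, by omega⟩ * y ⟨2 * i + 1, by omega⟩ +
      x ⟨2 * i + 1, by omega⟩ * y ⟨2 * i, by omega⟩))
    (fun _ _ _ => by simp only [Pi.add_apply, ← sum_add_distrib]; congr 1; ext; ring)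
    (fun _ _ _ => by simp only [Pi.smul_apply, smul_eq_mul, mul_sum]; congr 1; ext; ring)
    (fun _ _ _ => by simp only [Pi.add_apply, ← sum_add_distrib]; congr 1; ext; ring)
    (fun _ _ _ => by simp only [Pi.smul_apply, smul_eq_mul, mul_sum]; congr 1; ext; ring)

variable {n : ℕ}

lemma symplecticForm_apply (x y : Fin n → ZMod 2) :
    symplecticForm n x y = ∑ i : Fin (n / 2), (x ⟨2 * i, by omega⟩ * y ⟨2 * i + 1, by omega⟩ +
      x ⟨2 * i + 1, by omega⟩ * y ⟨2 * i, by omega⟩) := rfl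

lemma symplecticForm_isAlt : (symplecticForm n).IsAlt := fun x => by
  simp [symplecticForm_apply, mul_comm, CharTwo.add_self_eq_zero]

lemma symplecticForm_single_single (a b : Fin n) :
    symplecticForm n (Pi.single a 1) (Pi.single b 1) =
      if a ≠ b ∧ (a : ℕ) / 2 = b / 2 then 1 else 0 := by
  rw [symplecticForm_apply]
  split_ifs with h
  · rw [sum_eq_single ⟨a / 2, by omega⟩]
    · simp only [Pi.single_apply, Fin.ext_iff]
      split_ifs <;> first | omega | simp
    · intro i _ hi
      simp only [Pi.single_apply, Fin.ext_iff, ne_eq] at hi ⊢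
      split_ifs <;> first | omega | simp
    · simp
  · refine sum_eq_zero fun i _ => ?_
    simp only [Pi.single_apply, Fin.ext_iff]
    split_ifs <;> first | omega | simp

lemma symplecticForm_separatingLeft (he : Even n) : (symplecticForm n).SeparatingLeft := by
  intro x hx
  ext k
  obtain ⟨p, hp⟩ : ∃ p : Fin n, ∀ a : Fin n, a ≠ p ∧ (a : ℕ) / 2 = p / 2 ↔ a = k := by
    refine ⟨⟨if (k : ℕ) % 2 = 0 then k + 1 else k - 1, ?_⟩, fun a => ?_⟩
    · have := Nat.even_iff.mp he
      split_ifs <;> omega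
    · simp only [ne_eq, Fin.ext_iff]
      split_ifs <;> omega
  have := hx (Pi.single p 1)
  rw [pi_eq_sum_univ' x, LinearMap.map_sum₂] at this
  simp only [map_smul, LinearMap.smul_apply, symplecticForm_single_single, hp, smul_eq_mul,
    mul_ite, mul_one, mul_zero, Fintype.sum_ite_eq'] at this
  exact this

lemma Qform_eq (hn : 2 ≤ n) (he : Even n) (x : Fin n → ZMod 2) :
    Qform n hn x = (∑ i : Fin (n / 2), x ⟨2 * i, by omega⟩ * x ⟨2 * i + 1, by omega⟩) +
      x ⟨n - 2, by omega⟩ + x ⟨n - 1, by omega⟩ := by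
  have hm : n / 2 - 1 + 1 = n / 2 := by omega
  have hlast : 2 * (n / 2 - 1) = n - 2 := by have := Nat.even_iff.mp he; omega
  rw [Qform, ← Fin.sum_congr' _ hm, Fin.sum_univ_castSucc, ZMod.pow_card, ZMod.pow_card]
  have hlast' : n - 2 + 1 = n - 1 := by omega
  simp only [Fin.val_cast, Fin.val_castSucc, Fin.val_last, hlast, hlast']
  ring

lemma Qform_add (hn : 2 ≤ n) (he : Even n) (x y : Fin n → ZMod 2) :
    Qform n hn (x + y) = Qform n hn x + Qform n hn y + symplecticForm n x y := by
  simp only [Qform_eq hn he, symplecticForm_apply, Pi.add_apply]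
  have hsum : ∑ i : Fin (n / 2), (x ⟨2 * i, by omega⟩ + y ⟨2 * i, by omega⟩) *
      (x ⟨2 * i + 1, by omega⟩ + y ⟨2 * i + 1, by omega⟩) =
      (∑ i : Fin (n / 2), x ⟨2 * i, by omega⟩ * x ⟨2 * i + 1, by omega⟩) +
      (∑ i : Fin (n / 2), y ⟨2 * i, by omega⟩ * y ⟨2 * i + 1, by omega⟩) +
      ∑ i : Fin (n / 2), (x ⟨2 * i, by omega⟩ * y ⟨2 * i + 1, by omega⟩ +
        x ⟨2 * i + 1, by omega⟩ * y ⟨2 * i, by omega⟩) := by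
    simp only [← sum_add_distrib]
    exact sum_congr rfl fun i _ => by ring
  rw [hsum]
  ring

lemma polarForm_Qform (hn : 2 ≤ n) (he : Even n) (x y : Fin n → ZMod 2) :
    polarForm (Qform n hn) x y = symplecticForm n x y := by
  rw [polarForm, Qform_add hn he]
  linear_combination (Qform n hn x + Qform n hn y) * CharTwo.two_eq_zero (R := ZMod 2)

end StandardForm

section Tournament

/- `tournament m` is the transitive tournament `i → j` (`i < j`) switched at the vertices where
`switching m` is `1`; the switch makes the out-degree of `i` odd exactly for `i ≠ m - 1`. -/
def switching (m j : ℕ) : ZMod 2 := j + 1 + if j = m - 1 then 1 else 0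

def tournament (m i j : ℕ) : ZMod 2 := (if i < j then 1 else 0) + switching m i + switching m j

lemma tournament_self (m i : ℕ) : tournament m i i = 0 := by
  simp [tournament, CharTwo.add_self_eq_zero]

lemma tournament_add_tournament (m : ℕ) {i j : ℕ} (hij : i ≠ j) :
    tournament m i j + tournament m j i = 1 := by
  unfold tournament
  rcases Nat.lt_or_gt_of_ne hij with h | h
  · rw [if_pos h, if_neg (by omega)]
    linear_combination (switching m i + switching m j) * CharTwo.two_eq_zero (R := ZMod 2)
  · rw [if_neg (by omega), if_pos h]
    linear_combination (switching m i + switching m j) * CharTwo.two_eq_zero (R := ZMod 2)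

lemma sum_switching (m : ℕ) (hm : m % 4 = 1) : ∑ j ∈ range m, switching m j = 0 := by
  have hid : Even (∑ j ∈ range m, j) := by
    have h := sum_range_id_mul_two m
    obtain ⟨k, hk⟩ : ∃ k, m - 1 = 4 * k := ⟨(m - 1) / 4, by omega⟩
    rw [hk] at h
    exact ⟨m * k, by nlinarith⟩
  have hcast : ∑ j ∈ range m, (j : ZMod 2) = 0 := by
    rw [← Nat.cast_sum]
    exact hid.natCast_zmod_two
  simp only [switching, sum_add_distrib, hcast, sum_const, card_range, nsmul_eq_mul, mul_one,
    sum_ite_eq', mem_range]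
  rw [if_pos (by omega), (Nat.odd_iff.mpr (by omega) : Odd m).natCast_zmod_two]
  rfl

lemma sum_tournament (m : ℕ) (hm : m % 4 = 1) {i : ℕ} (hi : i < m) :
    ∑ j ∈ range m, tournament m i j = 1 + if i = m - 1 then 1 else 0 := by
  have hlt : ∑ j ∈ range m, (if i < j then (1 : ZMod 2) else 0) = i := by
    rw [sum_boole]
    have hf : (range m).filter (i < ·) = Ioo i m := by ext; simp; omega
    rw [hf, Nat.card_Ioo, ZMod.natCast_eq_natCast_iff']
    omega
  simp only [tournament, sum_add_distrib]
  rw [hlt, sum_switching m hm, sum_const, card_range, nsmul_eq_mul,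
    (Nat.odd_iff.mpr (by omega) : Odd m).natCast_zmod_two, one_mul, add_zero, switching]
  linear_combination (i : ZMod 2) * CharTwo.two_eq_zero (R := ZMod 2)

end Tournament

section Clique

variable {n : ℕ}

def pairVec (n : ℕ) (j : Fin (n / 2)) : Fin n → ZMod 2 :=
  Pi.single ⟨2 * j, by omega⟩ 1 + Pi.single ⟨2 * j + 1, by omega⟩ 1

lemma symplecticForm_single_pairVec (a : Fin n) (j : Fin (n / 2)) :
    symplecticForm n (Pi.single a 1) (pairVec n j) = if (a : ℕ) / 2 = j then 1 else 0 := by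
  simp only [pairVec, map_add, symplecticForm_single_single, ne_eq, Fin.ext_iff]
  split_ifs <;> first | omega | decide

lemma symplecticForm_pairVec_pairVec (i j : Fin (n / 2)) :
    symplecticForm n (pairVec n i) (pairVec n j) = 0 := by
  rw [pairVec, map_add, LinearMap.add_apply, symplecticForm_single_pairVec,
    symplecticForm_single_pairVec]
  simp only [Nat.mul_div_cancel_left _ two_pos,
    show ∀ k : ℕ, (2 * k + 1) / 2 = k by omega, CharTwo.add_self_eq_zero]

lemma Qform_single (hn : 2 ≤ n) (he : Even n) (a : Fin n) :
    Qform n hn (Pi.single a 1) = if n - 2 ≤ a then 1 else 0 := by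
  rw [Qform_eq hn he, sum_eq_zero fun i _ => ?_]
  · simp only [Pi.single_apply, Fin.ext_iff]
    split_ifs <;> first | omega | decide
  · simp only [Pi.single_apply, Fin.ext_iff]
    split_ifs <;> first | omega | simp

lemma Qform_pairVec (hn : 2 ≤ n) (he : Even n) (j : Fin (n / 2)) :
    Qform n hn (pairVec n j) = 1 := by
  rw [pairVec, Qform_add hn he, Qform_single hn he, Qform_single hn he,
    symplecticForm_single_single]
  have := Nat.even_iff.mp he
  simp only [ne_eq, Fin.ext_iff]
  split_ifs <;> first | omega | decide

def cliqueVec (n : ℕ) (a : Fin n) : Fin n → ZMod 2 :=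
  Pi.single a 1 + ∑ j : Fin (n / 2), tournament (n / 2) (a / 2) j • pairVec n j

lemma symplecticForm_single_cliqueVec (he : Even n) (a b : Fin n) :
    symplecticForm n (Pi.single a 1) (cliqueVec n b) =
      symplecticForm n (Pi.single a 1) (Pi.single b 1) + tournament (n / 2) (b / 2) (a / 2) := by
  have ha : (a : ℕ) / 2 < n / 2 := by have := Nat.even_iff.mp he; omega
  simp only [cliqueVec, map_add, map_sum, map_smul, symplecticForm_single_pairVec, smul_eq_mul,
    mul_ite, mul_one, mul_zero]
  rw [Fintype.sum_eq_single ⟨a / 2, ha⟩ fun j hj => if_neg fun h => hj (Fin.ext h.symm),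
    if_pos rfl]

lemma symplecticForm_pairVec_cliqueVec (j : Fin (n / 2)) (b : Fin n) :
    symplecticForm n (pairVec n j) (cliqueVec n b) = if (b : ℕ) / 2 = j then 1 else 0 := by
  simp only [cliqueVec, map_add, map_sum, map_smul, symplecticForm_pairVec_pairVec, smul_zero,
    sum_const_zero, add_zero]
  rw [isAlt_comm symplecticForm_isAlt, symplecticForm_single_pairVec]

lemma symplecticForm_cliqueVec (he : Even n) (a b : Fin n) :
    symplecticForm n (cliqueVec n a) (cliqueVec n b) = if a = b then 0 else 1 := by
  have hb : (b : ℕ) / 2 < n / 2 := by have := Nat.even_iff.mp he; omega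
  conv_lhs => rw [cliqueVec]
  simp only [map_add, LinearMap.add_apply, LinearMap.map_sum₂, LinearMap.map_smul₂,
    symplecticForm_pairVec_cliqueVec, symplecticForm_single_cliqueVec he, smul_eq_mul, mul_ite,
    mul_one, mul_zero]
  rw [Fintype.sum_eq_single ⟨b / 2, hb⟩ fun j hj => if_neg fun h => hj (Fin.ext h.symm),
    if_pos rfl, symplecticForm_single_single]
  by_cases hab : a = b
  · simp [hab, tournament_self, CharTwo.add_self_eq_zero]
  · by_cases hh : (a : ℕ) / 2 = b / 2
    · simp [hab, hh, tournament_self]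
    · simp only [hab, hh, if_false, and_false, zero_add, ne_eq, not_false_eq_true]
      exact (add_comm _ _).trans (tournament_add_tournament _ hh)

lemma Qform_cliqueVec (hn : 2 ≤ n) (hmod : n % 8 = 2) (a : Fin n) :
    Qform n hn (cliqueVec n a) = 1 := by
  have he : Even n := Nat.even_iff.mpr (by omega)
  have ha : (a : ℕ) / 2 < n / 2 := by omega
  have hQ := Qform_add hn he
  have hpairs : Qform n hn (∑ j : Fin (n / 2), tournament (n / 2) (a / 2) j • pairVec n j) =
      ∑ j : Fin (n / 2), tournament (n / 2) (a / 2) j := by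
    rw [quadratic_sum hQ _ _ 0 fun i _ j _ _ => by
      simp [symplecticForm_pairVec_pairVec]]
    simp [quadratic_smul hQ, Qform_pairVec hn he]
  have hcross : symplecticForm n (Pi.single a 1)
      (∑ j : Fin (n / 2), tournament (n / 2) (a / 2) j • pairVec n j) = 0 := by
    simp only [map_sum, map_smul, symplecticForm_single_pairVec, smul_eq_mul, mul_ite, mul_one,
      mul_zero]
    rw [Fintype.sum_eq_single ⟨a / 2, ha⟩ fun j hj => if_neg fun h => hj (Fin.ext h.symm),
      if_pos rfl, tournament_self]
  rw [cliqueVec, hQ, hpairs, hcross, Qform_single hn he,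
    Fin.sum_univ_eq_sum_range (fun j => tournament (n / 2) (a / 2) j),
    sum_tournament _ (by omega) ha]
  split_ifs <;> first | omega | decide

lemma symplecticForm_cliqueVec_sum (he : Even n) (a : Fin n) :
    symplecticForm n (cliqueVec n a) (∑ b, cliqueVec n b) = 1 := by
  have hsplit (b : Fin n) : (if a = b then (0 : ZMod 2) else 1) = 1 + if a = b then 1 else 0 := by
    split_ifs <;> decide
  simp only [map_sum, symplecticForm_cliqueVec he, hsplit, sum_add_distrib, sum_ite_eq, mem_univ,
    if_true, sum_const, card_univ, Fintype.card_fin, nsmul_eq_mul, mul_one, he.natCast_zmod_two,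
    zero_add]

lemma Qform_sum_cliqueVec (hn : 2 ≤ n) (hmod : n % 8 = 2) :
    Qform n hn (∑ a, cliqueVec n a) = 1 := by
  have he : Even n := Nat.even_iff.mpr (by omega)
  have hodd : Odd (n.choose 2) := by
    obtain ⟨k, rfl⟩ : ∃ k, n = 2 * k := ⟨n / 2, by omega⟩
    rw [Nat.choose_two_right, Nat.mul_assoc, Nat.mul_div_cancel_left _ two_pos]
    exact Nat.odd_mul.mpr ⟨Nat.odd_iff.mpr (by omega), Nat.odd_iff.mpr (by omega)⟩
  rw [quadratic_sum (Qform_add hn he) _ _ 1 fun a _ b _ hab => by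
    rw [symplecticForm_cliqueVec he, if_neg hab]]
  simp [Qform_cliqueVec hn hmod, he.natCast_zmod_two, hodd.natCast_zmod_two]

end Clique

section Points

variable {n : ℕ}

def pointVec (n : ℕ) (k : Fin (n + 2)) : Fin n → ZMod 2 :=
  if h : (k : ℕ) < n then cliqueVec n ⟨k, h⟩ else if (k : ℕ) = n then ∑ a, cliqueVec n a else 0

lemma pointVec_of_lt {k : Fin (n + 2)} (hk : (k : ℕ) < n) :
    pointVec n k = cliqueVec n ⟨k, hk⟩ :=
  dif_pos hk

lemma pointVec_of_eq {k : Fin (n + 2)} (hk : (k : ℕ) = n) : pointVec n k = ∑ a, cliqueVec n a := by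
  rw [pointVec, dif_neg (by omega), if_pos hk]

lemma pointVec_of_eq_succ {k : Fin (n + 2)} (hk : (k : ℕ) = n + 1) : pointVec n k = 0 := by
  rw [pointVec, dif_neg (by omega), if_neg (by omega)]

lemma isPointGram_pointVec (he : Even n) :
    IsPointGram (symplecticForm n) (pointVec n) (Fin.last (n + 1)) := by
  intro k l
  simp only [Fin.ext_iff, Fin.val_last]
  rcases (by omega : (k : ℕ) < n ∨ (k : ℕ) = n ∨ (k : ℕ) = n + 1) with hk | hk | hk <;>
  rcases (by omega : (l : ℕ) < n ∨ (l : ℕ) = n ∨ (l : ℕ) = n + 1) with hl | hl | hl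
  · rw [pointVec_of_lt hk, pointVec_of_lt hl, symplecticForm_cliqueVec he]
    simp only [Fin.mk.injEq]
    split_ifs <;> first | omega | decide
  · rw [pointVec_of_lt hk, pointVec_of_eq hl, symplecticForm_cliqueVec_sum he]
    split_ifs <;> first | omega | decide
  · rw [pointVec_of_eq_succ hl, map_zero]
    split_ifs <;> first | omega | decide
  · rw [pointVec_of_eq hk, pointVec_of_lt hl, isAlt_comm symplecticForm_isAlt,
      symplecticForm_cliqueVec_sum he]
    split_ifs <;> first | omega | decide
  · rw [pointVec_of_eq hk, pointVec_of_eq hl, symplecticForm_isAlt.self_eq_zero]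
    split_ifs <;> first | omega | decide
  all_goals
    first | rw [pointVec_of_eq_succ hk] | rw [pointVec_of_eq_succ hl]
    simp only [map_zero, LinearMap.zero_apply]
    split_ifs <;> first | omega | decide

lemma Qform_pointVec (hn : 2 ≤ n) (hmod : n % 8 = 2) (k : Fin (n + 2)) :
    Qform n hn (pointVec n k) = 1 + if k = Fin.last (n + 1) then 1 else 0 := by
  simp only [Fin.ext_iff, Fin.val_last]
  rcases (by omega : (k : ℕ) < n ∨ (k : ℕ) = n ∨ (k : ℕ) = n + 1) with hk | hk | hk
  · rw [pointVec_of_lt hk, Qform_cliqueVec hn hmod, if_neg (by omega), add_zero]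
  · rw [pointVec_of_eq hk, Qform_sum_cliqueVec hn hmod, if_neg (by omega), add_zero]
  · rw [pointVec_of_eq_succ hk, quadratic_zero (Qform_add hn (Nat.even_iff.mpr (by omega))),
      if_pos hk]
    rfl

lemma Qform_pointVec_add (hn : 2 ≤ n) (hmod : n % 8 = 2) {a b : Fin (n + 2)} (hab : a ≠ b) :
    Qform n hn (pointVec n a + pointVec n b) = 1 := by
  have he : Even n := Nat.even_iff.mpr (by omega)
  rw [Qform_add hn he, Qform_pointVec hn hmod, Qform_pointVec hn hmod, isPointGram_pointVec he,
    if_neg hab]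
  linear_combination (1 + (if a = Fin.last (n + 1) then (1 : ZMod 2) else 0) +
    if b = Fin.last (n + 1) then 1 else 0) * CharTwo.two_eq_zero (R := ZMod 2)

lemma sum_pointVec : ∑ k, pointVec n k = 0 := by
  rw [Fin.sum_univ_castSucc, Fin.sum_univ_castSucc,
    pointVec_of_eq_succ (k := Fin.last (n + 1)) (by simp),
    pointVec_of_eq (k := (Fin.last n).castSucc) (by simp), add_zero,
    sum_congr rfl fun a _ => pointVec_of_lt (k := a.castSucc.castSucc) (by simp)]
  exact add_self_eq_zero_of_zmod_two _

noncomputable def cliqueBasis (he : Even n) (hn : 0 < n) :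
    Module.Basis (Fin n) (ZMod 2) (Fin n → ZMod 2) :=
  have : Nonempty (Fin n) := ⟨⟨0, hn⟩⟩
  basisOfLinearIndependentOfCardEqFinrank
    (linearIndependent_of_gram_eq_one_sub _ (by simpa using he) _ (symplecticForm_cliqueVec he))
    (by simp)

lemma cliqueBasis_apply (he : Even n) (hn : 0 < n) (a : Fin n) :
    cliqueBasis he hn a = cliqueVec n a := by
  simp [cliqueBasis]

noncomputable def pointSection (he : Even n) (hn : 0 < n) :
    (Fin n → ZMod 2) →ₗ[ZMod 2] Fin (n + 2) → ZMod 2 :=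
  (cliqueBasis he hn).constr (ZMod 2) fun a =>
    Pi.single (Fin.castAdd 2 a) 1 + Pi.single (Fin.last (n + 1)) 1

lemma isPointFrame_pointVec (he : Even n) (hn : 0 < n) :
    IsPointFrame (symplecticForm n) (pointVec n) (Fin.last (n + 1)) (pointSection he hn) where
  gram := isPointGram_pointVec he
  sum_eq_zero := sum_pointVec
  linearCombination_section w := by
    have h : Fintype.linearCombination (ZMod 2) (pointVec n) ∘ₗ pointSection he hn =
        LinearMap.id := (cliqueBasis he hn).ext fun a => by
      rw [LinearMap.comp_apply, pointSection, Module.Basis.constr_basis, map_add,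
        Fintype.linearCombination_apply_single, Fintype.linearCombination_apply_single,
        pointVec_of_eq_succ (k := Fin.last (n + 1)) (by simp), one_smul, one_smul, add_zero,
        pointVec_of_lt (by simp), LinearMap.id_apply, cliqueBasis_apply]
      rfl
    exact LinearMap.congr_fun h w
  sum_section w := by
    have h : (∑ k, LinearMap.proj k : (Fin (n + 2) → ZMod 2) →ₗ[ZMod 2] ZMod 2) ∘ₗ
        pointSection he hn = 0 := (cliqueBasis he hn).ext fun a => by
      simp [pointSection, sum_add_distrib, CharTwo.add_self_eq_zero]
    simpa using LinearMap.congr_fun h w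

end Points

end PhiOMinus

open PhiOMinus

/-- φ(O_n^{-}(2)) = n + 2 when n ≡ 2 (mod 8): S_{n+2} embeds with transpositions going to orthogonal transvections t_v with Q(v) = 1, while S_{n+3} does not. -/
theorem phi_O_minus_2_mod8_two (n : ℕ) (hn : 10 ≤ n) (hmod : n % 8 = 2) :
    (∃ ψ : Equiv.Perm (Fin (n + 2)) →* ((Fin n → ZMod 2) ≃ₗ[ZMod 2] (Fin n → ZMod 2)),
      Function.Injective ψ ∧
      ∀ τ : Equiv.Perm (Fin (n + 2)), τ.IsSwap →
        ∃ v : Fin n → ZMod 2, Qform n (by omega) v = 1 ∧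
          ∀ w, (ψ τ) w = w + polarForm (Qform n (by omega)) w v • v) ∧
    ¬ (∃ ψ : Equiv.Perm (Fin (n + 3)) →* ((Fin n → ZMod 2) ≃ₗ[ZMod 2] (Fin n → ZMod 2)),
      Function.Injective ψ ∧
      ∀ τ : Equiv.Perm (Fin (n + 3)), τ.IsSwap →
        ∃ v : Fin n → ZMod 2, Qform n (by omega) v = 1 ∧
          ∀ w, (ψ τ) w = w + polarForm (Qform n (by omega)) w v • v) := by
  have he : Even n := Nat.even_iff.mpr (by omega)
  have hframe := isPointFrame_pointVec he (by omega)
  refine ⟨⟨(LinearMap.GeneralLinearGroup.generalLinearEquiv _ _).toMonoidHom.comp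
      (permRepHom hframe).toHomUnits, fun σ τ hστ => ?_, ?_⟩, ?_⟩
  · exact permRepHom_injective hframe (by omega) (congrArg LinearEquiv.toLinearMap hστ)
  · rintro τ ⟨a, b, hab, rfl⟩
    refine ⟨pointVec n a + pointVec n b, Qform_pointVec_add _ hmod hab, fun w => ?_⟩
    rw [polarForm_Qform _ he]
    exact hframe.permRep_swap a b w
  · rintro ⟨ψ, hψ, hswap⟩
    refine not_exists_injective_transvection_hom symplecticForm_isAlt
      (symplecticForm_separatingLeft he) (m := n + 2) (by simpa [parity_simps] using he) (by simp)
      ⟨ψ, hψ, fun τ hτ => ?_⟩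
    obtain ⟨v, -, hv⟩ := hswap τ hτ
    exact ⟨v, fun w => by rw [hv, polarForm_Qform _ he]; rfl⟩
end
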